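/- arXiv:1107.5336 — 4 statements merged into one kernel-verified Lean document; each statement's English description precedes it below -/
import Mathlib

section
/- On the two-dimensional discrete torus of side N, if a weight r belongs to R* then φ^r ∈ dΛ², i.e. there exists a 2-chain ψ with dψ = φ^r. The same conclusion holds if r belongs to R^e. -/
namespace Torus

/-- Vertices of the two-dimensional discrete torus of side `N = n + 3`. -/
abbrev V (n : ℕ) := ZMod (n + 3) × ZMod (n + 3)

def e1 (n : ℕ) : V n := (1, 0)
def e2 (n : ℕ) : V n := (0, 1)

/-- `(a, b)` is an oriented edge of the discrete torus. -/
def isEdge (n : ℕ) (a b : V n) : Prop :=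
  b = a + e1 n ∨ b = a - e1 n ∨ b = a + e2 n ∨ b = a - e2 n

instance (n : ℕ) (a b : V n) : Decidable (isEdge n a b) := by
  unfold isEdge; infer_instance

/-- A discrete vector field: antisymmetric and supported on edges. -/
def IsVF (n : ℕ) (φ : V n → V n → ℝ) : Prop :=
  (∀ a b, φ a b = -φ b a) ∧ ∀ a b, ¬isEdge n a b → φ a b = 0

/-- A 2-chain, viewed as a function on oriented faces: the faces are indexed by
`V n × Bool`, where `(x, true)` is the anticlockwise-oriented unit square with lower-left
corner `x` and `(x, false)` is the same square with the clockwise orientation. A 2-chain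
takes opposite values on oppositely oriented faces. -/
def IsChain (n : ℕ) (ψ : V n → Bool → ℝ) : Prop :=
  ∀ x, ψ x false = -ψ x true

/-- The four oriented edges of the elementary 4-cycle of the anticlockwise face at `x`. -/
def aEdges (n : ℕ) (x : V n) : List (V n × V n) :=
  [(x, x + e1 n), (x + e1 n, x + e1 n + e2 n), (x + e1 n + e2 n, x + e2 n), (x + e2 n, x)]

/-- The four oriented edges of the elementary 4-cycle of the oriented face `(x, o)`. -/
def faceEdges (n : ℕ) (x : V n) (o : Bool) : List (V n × V n) :=
  if o then aEdges n x else (aEdges n x).map fun p => (p.2, p.1)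

/-- The boundary of a 2-chain: `dψ(a,b) = ∑_{f : (a,b) ∈ f} ψ(f)`. -/
def dChain (n : ℕ) (ψ : V n → Bool → ℝ) (a b : V n) : ℝ :=
  ∑ x : V n, ∑ o : Bool, if (a, b) ∈ faceEdges n x o then ψ x o else 0

/-- The discrete vector field associated to a weight. -/
def phiOf (n : ℕ) (r : V n → V n → ℝ) (a b : V n) : ℝ := r a b - r b a

/-- A weight: nonnegative and supported on edges. -/
def IsWeight (n : ℕ) (r : V n → V n → ℝ) : Prop :=
  (∀ a b, 0 ≤ r a b) ∧ ∀ a b, ¬isEdge n a b → r a b = 0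

/-- The divergence of a discrete vector field at a vertex. -/
def dvg (n : ℕ) (φ : V n → V n → ℝ) (x : V n) : ℝ :=
  ∑ y : V n, if isEdge n x y then φ x y else 0

/-- A cycle on the discrete torus: a closed path through `len + 2 ≥ 2` distinct vertices,
each step moving along an oriented edge. -/
structure TCycle (n : ℕ) where
  len : ℕ
  z : Fin (len + 2) → V n
  inj : Function.Injective z
  steps : ∀ i : Fin (len + 2), isEdge n (z i) (z (i + 1))

/-- The displacement vector (in `ℤ²`) of a step along an edge. -/
def disp (n : ℕ) (a b : V n) : ℤ × ℤ :=
  if b = a + e1 n then (1, 0)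
  else if b = a - e1 n then (-1, 0)
  else if b = a + e2 n then (0, 1)
  else if b = a - e2 n then (0, -1)
  else (0, 0)

/-- A cycle is homotopically trivial if its displacement vectors sum to zero. -/
def HomTrivial (n : ℕ) (C : TCycle n) : Prop :=
  (∑ i : Fin (C.len + 2), disp n (C.z i) (C.z (i + 1))) = 0

/-- The weight of a cycle: `1` on the oriented edges of the cycle, `0` elsewhere. -/
def rC (n : ℕ) (C : TCycle n) (a b : V n) : ℝ :=
  if ∃ i : Fin (C.len + 2), a = C.z i ∧ b = C.z (i + 1) then 1 else 0

/-- `R*`: weights admitting a decomposition into homotopically trivial cycles with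
nonnegative coefficients. -/
def MemRstar (n : ℕ) (r : V n → V n → ℝ) : Prop :=
  ∃ (l : ℕ) (C : Fin l → TCycle n) (ρ : Fin l → ℝ),
    (∀ i, 0 ≤ ρ i) ∧ (∀ i, HomTrivial n (C i)) ∧
    ∀ a b, r a b = ∑ i, ρ i * rC n (C i) a b

/-- Weight of the elementary 2-cycle `(x, y, x)` over an edge. -/
def r2 (n : ℕ) (x y : V n) (a b : V n) : ℝ :=
  if (a = x ∧ b = y) ∨ (a = y ∧ b = x) then 1 else 0

/-- Weight of the elementary 4-cycle of the oriented face `(x, o)`. -/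
def r4 (n : ℕ) (x : V n) (o : Bool) (a b : V n) : ℝ :=
  if (a, b) ∈ faceEdges n x o then 1 else 0

/-- `R^e`: weights admitting a decomposition into elementary cycles (the 2-cycles over
edges and the elementary 4-cycles of oriented faces) with nonnegative coefficients. -/
def MemRe (n : ℕ) (r : V n → V n → ℝ) : Prop :=
  ∃ (ρ₂ : V n → V n → ℝ) (ρ₄ : V n → Bool → ℝ),
    (∀ x y, 0 ≤ ρ₂ x y) ∧ (∀ x o, 0 ≤ ρ₄ x o) ∧ (∀ x y, ¬isEdge n x y → ρ₂ x y = 0) ∧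
    ∀ a b, r a b = (∑ x : V n, ∑ y : V n, ρ₂ x y * r2 n x y a b)
        + ∑ x : V n, ∑ o : Bool, ρ₄ x o * r4 n x o a b


lemma one_ne (n : ℕ) : (1 : ZMod (n+3)) ≠ 0 := by
  haveI : Fact (1 < n+3) := ⟨by omega⟩
  exact one_ne_zero

lemma two_ne (n : ℕ) : (2 : ZMod (n+3)) ≠ 0 := by
  intro h
  have h2 : ((2:ℕ) : ZMod (n+3)) = 0 := by exact_mod_cast h
  rw [ZMod.natCast_eq_zero_iff] at h2
  have := Nat.le_of_dvd (by norm_num) h2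
  omega

lemma mem_a1 (n : ℕ) (a b y : V n) (h : b = a + e1 n) : (a, b) ∈ aEdges n y ↔ y = a := by
  subst h
  obtain ⟨a1, a2⟩ := a; obtain ⟨y1, y2⟩ := y
  simp only [aEdges, List.mem_cons, List.mem_singleton, List.not_mem_nil, or_false,
    Prod.mk.injEq, e1, e2, Prod.mk_add_mk, add_zero, zero_add]
  constructor
  · rintro (⟨⟨h1,h2⟩,_⟩|⟨⟨h1,h2⟩,⟨h3,h4⟩⟩|⟨⟨h1,h2⟩,⟨h3,h4⟩⟩|⟨⟨h1,h2⟩,⟨h3,h4⟩⟩)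
    · exact ⟨h1.symm, h2.symm⟩
    · exact absurd (show (1:ZMod (n+3)) = 0 by linear_combination h2 - h4) (one_ne n)
    · exact absurd (show (2:ZMod (n+3)) = 0 by linear_combination h3 - h1) (two_ne n)
    · exact absurd (show (1:ZMod (n+3)) = 0 by linear_combination h3 - h1) (one_ne n)
  · rintro ⟨rfl, rfl⟩
    tauto

lemma mem_a2 (n : ℕ) (a b y : V n) (h : b = a - e1 n) : (a, b) ∈ aEdges n y ↔ y = b - e2 n := by
  subst h
  obtain ⟨a1, a2⟩ := a; obtain ⟨y1, y2⟩ := y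
  simp only [aEdges, List.mem_cons, List.mem_singleton, List.not_mem_nil, or_false,
    Prod.mk.injEq, e1, e2, Prod.mk_add_mk, Prod.mk_sub_mk, add_zero, zero_add, sub_zero]
  constructor
  · rintro (⟨⟨h1,h2⟩,⟨h3,h4⟩⟩|⟨⟨h1,h2⟩,⟨h3,h4⟩⟩|⟨⟨h1,h2⟩,⟨h3,h4⟩⟩|⟨⟨h1,h2⟩,⟨h3,h4⟩⟩)
    · exact absurd (show (2:ZMod (n+3)) = 0 by linear_combination h1 - h3) (two_ne n)
    · exact absurd (show (1:ZMod (n+3)) = 0 by linear_combination h2 - h4) (one_ne n)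
    · exact ⟨by linear_combination -h1, by linear_combination -h2⟩
    · exact absurd (show (1:ZMod (n+3)) = 0 by linear_combination h1 - h3) (one_ne n)
  · rintro ⟨rfl, rfl⟩
    refine Or.inr (Or.inr (Or.inl ⟨⟨by ring, by ring⟩, ⟨by ring, by ring⟩⟩))

lemma mem_a3 (n : ℕ) (a b y : V n) (h : b = a + e2 n) : (a, b) ∈ aEdges n y ↔ y = a - e1 n := by
  subst h
  obtain ⟨a1, a2⟩ := a; obtain ⟨y1, y2⟩ := y
  simp only [aEdges, List.mem_cons, List.mem_singleton, List.not_mem_nil, or_false,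
    Prod.mk.injEq, e1, e2, Prod.mk_add_mk, Prod.mk_sub_mk, add_zero, zero_add, sub_zero]
  constructor
  · rintro (⟨⟨h1,h2⟩,⟨h3,h4⟩⟩|⟨⟨h1,h2⟩,⟨h3,h4⟩⟩|⟨⟨h1,h2⟩,⟨h3,h4⟩⟩|⟨⟨h1,h2⟩,⟨h3,h4⟩⟩)
    · exact absurd (show (1:ZMod (n+3)) = 0 by linear_combination h1 - h3) (one_ne n)
    · exact ⟨by linear_combination -h1, by linear_combination -h2⟩
    · exact absurd (show (1:ZMod (n+3)) = 0 by linear_combination h3 - h1) (one_ne n)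
    · exact absurd (show (2:ZMod (n+3)) = 0 by linear_combination h4 - h2) (two_ne n)
  · rintro ⟨rfl, rfl⟩
    refine Or.inr (Or.inl ⟨⟨by ring, by ring⟩, ⟨by ring, by ring⟩⟩)

lemma mem_a4 (n : ℕ) (a b y : V n) (h : b = a - e2 n) : (a, b) ∈ aEdges n y ↔ y = b := by
  subst h
  obtain ⟨a1, a2⟩ := a; obtain ⟨y1, y2⟩ := y
  simp only [aEdges, List.mem_cons, List.mem_singleton, List.not_mem_nil, or_false,
    Prod.mk.injEq, e1, e2, Prod.mk_add_mk, Prod.mk_sub_mk, add_zero, zero_add, sub_zero]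
  constructor
  · rintro (⟨⟨h1,h2⟩,⟨h3,h4⟩⟩|⟨⟨h1,h2⟩,⟨h3,h4⟩⟩|⟨⟨h1,h2⟩,⟨h3,h4⟩⟩|⟨⟨h1,h2⟩,⟨h3,h4⟩⟩)
    · exact absurd (show (1:ZMod (n+3)) = 0 by linear_combination h1 - h3) (one_ne n)
    · exact absurd (show (2:ZMod (n+3)) = 0 by linear_combination h2 - h4) (two_ne n)
    · exact absurd (show (1:ZMod (n+3)) = 0 by linear_combination h3 - h1) (one_ne n)
    · exact ⟨by linear_combination -h1, by linear_combination -h2⟩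
  · rintro ⟨rfl, rfl⟩
    refine Or.inr (Or.inr (Or.inr ⟨⟨by ring, by ring⟩, ⟨by ring, by ring⟩⟩))

lemma mem_map_swap (n : ℕ) (L : List (V n × V n)) (a b : V n) :
    (a, b) ∈ L.map (fun p => (p.2, p.1)) ↔ (b, a) ∈ L := by
  rw [List.mem_map]
  constructor
  · rintro ⟨⟨u, v⟩, hp, h⟩
    simp only [Prod.mk.injEq] at h
    obtain ⟨rfl, rfl⟩ := h
    exact hp
  · intro h; exact ⟨(b, a), h, rfl⟩

lemma mem_faceEdges_isEdge (n : ℕ) (a b y : V n) (o : Bool) :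
    (a, b) ∈ faceEdges n y o → isEdge n a b := by
  have key : ∀ u v : V n, (u, v) ∈ aEdges n y → isEdge n u v := by
    intro u v hm
    simp only [aEdges, List.mem_cons, List.mem_singleton, List.not_mem_nil, or_false,
      Prod.mk.injEq] at hm
    rcases hm with ⟨rfl, rfl⟩|⟨rfl, rfl⟩|⟨rfl, rfl⟩|⟨rfl, rfl⟩
    · exact Or.inl rfl
    · exact Or.inr (Or.inr (Or.inl rfl))
    · exact Or.inr (Or.inl (by abel))
    · exact Or.inr (Or.inr (Or.inr (by abel)))
  cases o with
  | true => exact key a b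
  | false =>
    intro hm
    rw [faceEdges, if_neg (by simp), mem_map_swap] at hm
    have h := key b a hm
    rcases h with h|h|h|h
    · exact Or.inr (Or.inl (by rw [h]; abel))
    · exact Or.inl (by rw [h]; abel)
    · exact Or.inr (Or.inr (Or.inr (by rw [h]; abel)))
    · exact Or.inr (Or.inr (Or.inl (by rw [h]; abel)))


lemma sum_univ_zmod (n : ℕ) (f : ZMod (n+3) → ℝ) :
    ∑ x : ZMod (n+3), f x = ∑ k ∈ Finset.range (n+3), f (k : ZMod (n+3)) := by
  refine Finset.sum_nbij' (fun x => x.val) (fun k => (k : ZMod (n+3))) ?_ ?_ ?_ ?_ ?_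
  · intro a _; exact Finset.mem_range.2 (ZMod.val_lt a)
  · intro a _; exact Finset.mem_univ _
  · intro a _; exact ZMod.natCast_rightInverse a
  · intro a ha; exact ZMod.val_cast_of_lt (Finset.mem_range.1 ha)
  · intro a _; rw [ZMod.natCast_rightInverse a]

lemma sum_step (n : ℕ) (G : ZMod (n+3) → ℝ) (h : ∑ x : ZMod (n+3), G x = 0) (i : ZMod (n+3)) :
    ∑ k ∈ Finset.range (i+1).val, G (k : ZMod (n+3))
      = (∑ k ∈ Finset.range i.val, G (k : ZMod (n+3))) + G i := by
  haveI : Fact (1 < n + 3) := ⟨by omega⟩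
  have hvlt : i.val < n + 3 := ZMod.val_lt i
  by_cases hc : i.val = n + 2
  · have hieq : i = ((n+2 : ℕ) : ZMod (n+3)) := by rw [← ZMod.natCast_rightInverse i, hc]
    have h1 : i + 1 = 0 := by
      rw [hieq]
      have h2 : ((n+2 : ℕ) : ZMod (n+3)) + 1 = ((n+3 : ℕ) : ZMod (n+3)) := by push_cast; ring
      rw [h2, ZMod.natCast_self]
    rw [h1]
    rw [sum_univ_zmod, Finset.sum_range_succ] at h
    rw [ZMod.val_zero, Finset.range_zero, Finset.sum_empty, hc]
    have hG : G i = G ((n+2 : ℕ) : ZMod (n+3)) := by rw [← hieq]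
    rw [hG]
    linarith [h]
  · have h1 : (i + 1).val = i.val + 1 := by
      rw [ZMod.val_add_of_lt (by rw [ZMod.val_one]; omega), ZMod.val_one]
    rw [h1, Finset.sum_range_succ, ZMod.natCast_rightInverse i]

def Af (n : ℕ) (φ : V n → V n → ℝ) (x : V n) : ℝ := -φ (x + e1 n) (x + e1 n + e2 n)
def Bf (n : ℕ) (φ : V n → V n → ℝ) (x : V n) : ℝ := φ (x + e2 n) (x + e1 n + e2 n)
def psi0 (n : ℕ) (φ : V n → V n → ℝ) (x : V n) : ℝ :=
  (∑ k ∈ Finset.range x.1.val, Af n φ ((k : ZMod (n+3)), 0))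
  + ∑ k ∈ Finset.range x.2.val, Bf n φ (x.1, (k : ZMod (n+3)))

lemma hstep2 (n : ℕ) (φ : V n → V n → ℝ)
    (hH : ∀ i : ZMod (n+3), ∑ j : ZMod (n+3), φ (i, j) (i+1, j) = 0) (x : V n) :
    psi0 n φ (x + e2 n) = psi0 n φ x + Bf n φ x := by
  obtain ⟨i, j⟩ := x
  have hx : (i, j) + e2 n = (i, j + 1) := by simp [e2, Prod.ext_iff]
  have hB0 : ∑ k : ZMod (n+3), Bf n φ (i, k) = 0 := by
    rw [← hH i]
    apply Fintype.sum_equiv (Equiv.addRight (1 : ZMod (n+3)))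
    intro k
    simp [Bf, e1, e2, Prod.mk_add_mk, Equiv.coe_addRight]
  rw [hx]
  unfold psi0
  simp only
  rw [sum_step n (fun k => Bf n φ (i, k)) hB0 j]
  ring

lemma hstep1 (n : ℕ) (φ : V n → V n → ℝ)
    (hskew : ∀ a b, φ a b = -φ b a)
    (hdiv : ∀ x : V n, φ x (x + e1 n) + φ x (x - e1 n) + φ x (x + e2 n) + φ x (x - e2 n) = 0)
    (hV0 : ∑ i : ZMod (n+3), φ (i, 0) (i, 1) = 0) (x : V n) :
    psi0 n φ (x + e1 n) = psi0 n φ x + Af n φ x := by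
  obtain ⟨i, j⟩ := x
  have hx : (i, j) + e1 n = (i + 1, j) := by simp [e1, Prod.ext_iff]
  have hA0 : ∑ k : ZMod (n+3), Af n φ (k, 0) = 0 := by
    have heq : ∑ k : ZMod (n+3), Af n φ (k, (0 : ZMod (n+3)))
        = ∑ m : ZMod (n+3), -φ (m, 0) (m, 1) := by
      apply Fintype.sum_equiv (Equiv.addRight (1 : ZMod (n+3)))
      intro k
      simp [Af, e1, e2, Prod.mk_add_mk, Equiv.coe_addRight]
    rw [heq, Finset.sum_neg_distrib, hV0, neg_zero]
  have hcurl : ∀ c : ZMod (n+3),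
      Bf n φ (i+1, c) - Bf n φ (i, c) = Af n φ (i, c+1) - Af n φ (i, c) := by
    intro c
    have hd := hdiv (i+1, c+1)
    have hs1 := hskew (i+1, c+1) (i, c+1)
    have hs2 := hskew (i+1, c+1) (i+1, c)
    simp only [Af, Bf, e1, e2, Prod.mk_add_mk, Prod.mk_sub_mk, add_zero, zero_add, sub_zero,
      add_sub_cancel_right] at hd ⊢
    linarith
  rw [hx]
  unfold psi0
  simp only
  rw [sum_step n (fun k => Af n φ (k, 0)) hA0 i]
  have tele : ∑ k ∈ Finset.range j.val, Bf n φ (i+1, (k : ZMod (n+3)))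
      = (∑ k ∈ Finset.range j.val, Bf n φ (i, (k : ZMod (n+3))))
        + (Af n φ (i, j) - Af n φ (i, 0)) := by
    have hc : ∀ k ∈ Finset.range j.val, Bf n φ (i+1, (k : ZMod (n+3)))
        = Bf n φ (i, (k : ZMod (n+3)))
          + (Af n φ (i, (k : ZMod (n+3)) + 1) - Af n φ (i, (k : ZMod (n+3)))) := by
      intro k _; linarith [hcurl (k : ZMod (n+3))]
    rw [Finset.sum_congr rfl hc, Finset.sum_add_distrib]
    congr 1
    have hcast : ∀ k : ℕ, ((k : ZMod (n+3)) + 1) = ((k+1 : ℕ) : ZMod (n+3)) := by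
      intro k; push_cast; ring
    calc ∑ k ∈ Finset.range j.val,
          (Af n φ (i, (k : ZMod (n+3)) + 1) - Af n φ (i, (k : ZMod (n+3))))
        = ∑ k ∈ Finset.range j.val,
          ((fun m : ℕ => Af n φ (i, (m : ZMod (n+3)))) (k+1)
            - (fun m : ℕ => Af n φ (i, (m : ZMod (n+3)))) k) := by
          apply Finset.sum_congr rfl; intro k _; rw [hcast k]
      _ = Af n φ (i, ((j.val : ℕ) : ZMod (n+3))) - Af n φ (i, ((0:ℕ) : ZMod (n+3))) := by
          simpa using Finset.sum_range_sub (fun m : ℕ => Af n φ (i, (m : ZMod (n+3)))) j.val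
      _ = Af n φ (i, j) - Af n φ (i, 0) := by rw [ZMod.natCast_rightInverse j]; norm_num
  rw [tele]
  ring



lemma const_of_step (n : ℕ) (f : ZMod (n+3) → ℝ) (h : ∀ i, f (i+1) = f i) (i : ZMod (n+3)) :
    f i = f 0 := by
  have key : ∀ m : ℕ, f (m : ZMod (n+3)) = f 0 := by
    intro m
    induction m with
    | zero => simp
    | succ k ih => push_cast; rw [h]; exact_mod_cast ih
  rw [← ZMod.natCast_rightInverse i]; exact key _

lemma sum_ite_exists {α : Type*} [Fintype α] (Q : α → Prop) [DecidablePred Q]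
    (huniq : ∀ k l, Q k → Q l → k = l) :
    ∑ k, (if Q k then (1:ℝ) else 0) = if ∃ k, Q k then 1 else 0 := by
  by_cases h : ∃ k, Q k
  · obtain ⟨k0, hk0⟩ := h
    rw [if_pos ⟨k0, hk0⟩, Finset.sum_eq_single k0]
    · rw [if_pos hk0]
    · intro b _ hb; rw [if_neg (fun hQ => hb (huniq _ _ hQ hk0))]
    · intro hmem; exact absurd (Finset.mem_univ k0) hmem
  · rw [if_neg h]
    apply Finset.sum_eq_zero
    intro k _
    rw [if_neg (fun hQ => h ⟨k, hQ⟩)]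

lemma isEdge_symm (n : ℕ) (a b : V n) (h : isEdge n a b) : isEdge n b a := by
  rcases h with rfl|rfl|rfl|rfl
  · exact Or.inr (Or.inl (by abel))
  · exact Or.inl (by abel)
  · exact Or.inr (Or.inr (Or.inr (by abel)))
  · exact Or.inr (Or.inr (Or.inl (by abel)))

lemma dChain_eq (n : ℕ) (ψ0 : V n → ℝ) (a b : V n) :
    dChain n (fun x o => if o then ψ0 x else -ψ0 x) a b
      = (∑ y : V n, if (a, b) ∈ aEdges n y then ψ0 y else 0)
        - ∑ y : V n, if (b, a) ∈ aEdges n y then ψ0 y else 0 := by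
  unfold dChain
  rw [← Finset.sum_sub_distrib]
  apply Finset.sum_congr rfl
  intro y _
  rw [Fintype.sum_bool]
  have hface_t : faceEdges n y true = aEdges n y := by rw [faceEdges, if_pos rfl]
  have hface_f : ((a, b) ∈ faceEdges n y false) = ((b, a) ∈ aEdges n y) := by
    rw [faceEdges, if_neg (by simp)]
    exact propext (mem_map_swap n (aEdges n y) a b)
  simp only [hface_t, hface_f, Bool.false_eq_true, if_false, if_true]
  split_ifs <;> ring

lemma exact_of_flux (n : ℕ) (φ : V n → V n → ℝ)
    (hskew : ∀ a b, φ a b = -φ b a)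
    (hsupp : ∀ a b, ¬isEdge n a b → φ a b = 0)
    (hdiv : ∀ x : V n, φ x (x + e1 n) + φ x (x - e1 n) + φ x (x + e2 n) + φ x (x - e2 n) = 0)
    (hH : ∀ i : ZMod (n+3), ∑ j : ZMod (n+3), φ (i, j) (i+1, j) = 0)
    (hV0 : ∑ i : ZMod (n+3), φ (i, 0) (i, 1) = 0) :
    ∃ ψ : V n → Bool → ℝ, IsChain n ψ ∧ ∀ a b, dChain n ψ a b = φ a b := by
  set Ψ := psi0 n φ with hΨ
  have step1 : ∀ x : V n, Ψ (x + e1 n) = Ψ x + Af n φ x := hstep1 n φ hskew hdiv hV0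
  have step2 : ∀ x : V n, Ψ (x + e2 n) = Ψ x + Bf n φ x := hstep2 n φ hH
  refine ⟨fun x o => if o then Ψ x else -Ψ x, fun x => by simp, ?_⟩
  intro a b
  rw [dChain_eq]
  by_cases hab : isEdge n a b
  · rcases hab with h|h|h|h
    · -- b = a + e1
      have m1 : ∀ y, ((a, b) ∈ aEdges n y) = (y = a) := fun y => propext (mem_a1 n a b y h)
      have m2 : ∀ y, ((b, a) ∈ aEdges n y) = (y = a - e2 n) := fun y =>
        propext (mem_a2 n b a y (by rw [h]; abel))
      simp only [m1, m2, Finset.sum_ite_eq', Finset.mem_univ, if_pos]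
      -- Ψ a - Ψ (a - e2) = φ a b
      have hs := step2 (a - e2 n)
      rw [sub_add_cancel] at hs
      rw [hs]
      have harg1 : a - e2 n + e2 n = a := sub_add_cancel a (e2 n)
      have harg2 : a - e2 n + e1 n + e2 n = b := by rw [h]; abel
      simp only [Bf, harg1, harg2]
      ring
    · -- b = a - e1
      have m1 : ∀ y, ((a, b) ∈ aEdges n y) = (y = b - e2 n) := fun y =>
        propext (mem_a2 n a b y h)
      have m2 : ∀ y, ((b, a) ∈ aEdges n y) = (y = b) := fun y =>
        propext (mem_a1 n b a y (by rw [h]; abel))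
      simp only [m1, m2, Finset.sum_ite_eq', Finset.mem_univ, if_pos]
      have hs := step2 (b - e2 n)
      rw [sub_add_cancel] at hs
      rw [hs]
      have harg1 : b - e2 n + e2 n = b := sub_add_cancel b (e2 n)
      have harg2 : b - e2 n + e1 n + e2 n = a := by rw [h]; abel
      simp only [Bf, harg1, harg2]
      rw [hskew a b]
      ring
    · -- b = a + e2
      have m1 : ∀ y, ((a, b) ∈ aEdges n y) = (y = a - e1 n) := fun y =>
        propext (mem_a3 n a b y h)
      have m2 : ∀ y, ((b, a) ∈ aEdges n y) = (y = a) := fun y =>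
        propext (mem_a4 n b a y (by rw [h]; abel))
      simp only [m1, m2, Finset.sum_ite_eq', Finset.mem_univ, if_pos]
      have hs := step1 (a - e1 n)
      rw [sub_add_cancel] at hs
      rw [hs]
      have harg1 : a - e1 n + e1 n = a := sub_add_cancel a (e1 n)
      have harg2 : a + e2 n = b := h.symm
      simp only [Af, harg1, harg2]
      ring
    · -- b = a - e2
      have m1 : ∀ y, ((a, b) ∈ aEdges n y) = (y = b) := fun y =>
        propext (mem_a4 n a b y h)
      have m2 : ∀ y, ((b, a) ∈ aEdges n y) = (y = b - e1 n) := fun y =>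
        propext (mem_a3 n b a y (by rw [h]; abel))
      simp only [m1, m2, Finset.sum_ite_eq', Finset.mem_univ, if_pos]
      have hs := step1 (b - e1 n)
      rw [sub_add_cancel] at hs
      rw [hs]
      have harg1 : b - e1 n + e1 n = b := sub_add_cancel b (e1 n)
      have harg2 : b + e2 n = a := by rw [h]; abel
      simp only [Af, harg1, harg2]
      rw [hskew a b]
      ring
  · rw [hsupp a b hab]
    have z1 : ∀ y : V n, (if (a, b) ∈ aEdges n y then Ψ y else 0) = 0 := by
      intro y
      rw [if_neg]
      intro hm
      exact hab (mem_faceEdges_isEdge n a b y true (by rwa [faceEdges, if_pos rfl]))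
    have z2 : ∀ y : V n, (if (b, a) ∈ aEdges n y then Ψ y else 0) = 0 := by
      intro y
      rw [if_neg]
      intro hm
      exact hab (isEdge_symm n b a (mem_faceEdges_isEdge n b a y true (by rwa [faceEdges, if_pos rfl])))
    rw [Finset.sum_congr rfl (fun y _ => z1 y), Finset.sum_congr rfl (fun y _ => z2 y)]
    simp


/-! ### Per-cycle lemmas -/

def phiC (n : ℕ) (Cy : TCycle n) (u v : V n) : ℝ := rC n Cy u v - rC n Cy v u

lemma phiC_skew (n : ℕ) (Cy : TCycle n) (u v : V n) : phiC n Cy u v = -phiC n Cy v u := by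
  unfold phiC; ring

lemma nbr_ne_1 (n : ℕ) (x : V n) : x + e1 n ≠ x - e1 n := by
  intro h; rw [Prod.ext_iff] at h; obtain ⟨h1, h2⟩ := h
  simp only [e1, Prod.fst_add, Prod.fst_sub] at h1
  exact two_ne n (by linear_combination h1)

lemma nbr_ne_2 (n : ℕ) (x : V n) : x + e1 n ≠ x + e2 n := by
  intro h; rw [Prod.ext_iff] at h; obtain ⟨h1, h2⟩ := h
  simp only [e1, e2, Prod.fst_add] at h1
  exact one_ne n (by linear_combination h1)

lemma nbr_ne_3 (n : ℕ) (x : V n) : x + e1 n ≠ x - e2 n := by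
  intro h; rw [Prod.ext_iff] at h; obtain ⟨h1, h2⟩ := h
  simp only [e1, e2, Prod.fst_add, Prod.fst_sub] at h1
  exact one_ne n (by linear_combination h1)

lemma nbr_ne_4 (n : ℕ) (x : V n) : x - e1 n ≠ x + e2 n := by
  intro h; rw [Prod.ext_iff] at h; obtain ⟨h1, h2⟩ := h
  simp only [e1, e2, Prod.fst_add, Prod.fst_sub] at h1
  exact one_ne n (by linear_combination -h1)

lemma nbr_ne_5 (n : ℕ) (x : V n) : x - e1 n ≠ x - e2 n := by
  intro h; rw [Prod.ext_iff] at h; obtain ⟨h1, h2⟩ := h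
  simp only [e1, e2, Prod.fst_sub] at h1
  exact one_ne n (by linear_combination -h1)

lemma nbr_ne_6 (n : ℕ) (x : V n) : x + e2 n ≠ x - e2 n := by
  intro h; rw [Prod.ext_iff] at h; obtain ⟨h1, h2⟩ := h
  simp only [e2, Prod.snd_add, Prod.snd_sub] at h2
  exact two_ne n (by linear_combination h2)

lemma four_ind_sum (n : ℕ) (x w : V n) (hw : isEdge n x w) :
    (if x + e1 n = w then (1:ℝ) else 0) + (if x - e1 n = w then 1 else 0)
      + (if x + e2 n = w then 1 else 0) + (if x - e2 n = w then 1 else 0) = 1 := by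
  rcases hw with rfl|rfl|rfl|rfl
  · rw [if_pos rfl, if_neg (nbr_ne_1 n x).symm, if_neg (nbr_ne_2 n x).symm,
      if_neg (nbr_ne_3 n x).symm]; norm_num
  · rw [if_neg (nbr_ne_1 n x), if_pos rfl, if_neg (nbr_ne_4 n x).symm,
      if_neg (nbr_ne_5 n x).symm]; norm_num
  · rw [if_neg (nbr_ne_2 n x), if_neg (nbr_ne_4 n x), if_pos rfl,
      if_neg (nbr_ne_6 n x).symm]; norm_num
  · rw [if_neg (nbr_ne_3 n x), if_neg (nbr_ne_5 n x), if_neg (nbr_ne_6 n x), if_pos rfl]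
    norm_num

lemma rC_out (n : ℕ) (Cy : TCycle n) (x v : V n) (k0 : Fin (Cy.len + 2))
    (hk0 : Cy.z k0 = x) : rC n Cy x v = if v = Cy.z (k0 + 1) then 1 else 0 := by
  unfold rC
  apply if_congr _ rfl rfl
  constructor
  · rintro ⟨k, hk, hv⟩
    have hkk : k = k0 := Cy.inj (hk.symm.trans hk0.symm)
    rw [hv, hkk]
  · intro hv; exact ⟨k0, hk0.symm, hv⟩

lemma rC_out_zero (n : ℕ) (Cy : TCycle n) (x v : V n) (hx : ¬∃ k, Cy.z k = x) :
    rC n Cy x v = 0 :=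
  if_neg fun ⟨k, hk, _⟩ => hx ⟨k, hk.symm⟩

lemma rC_in (n : ℕ) (Cy : TCycle n) (x v : V n) (k0 : Fin (Cy.len + 2))
    (hk0 : Cy.z (k0 + 1) = x) : rC n Cy v x = if v = Cy.z k0 then 1 else 0 := by
  unfold rC
  apply if_congr _ rfl rfl
  constructor
  · rintro ⟨k, hv, hk⟩
    have hkk : k + 1 = k0 + 1 := Cy.inj (hk.symm.trans hk0.symm)
    have : k = k0 := add_right_cancel hkk
    rw [hv, this]
  · intro hv; exact ⟨k0, hv, hk0.symm⟩

lemma rC_in_zero (n : ℕ) (Cy : TCycle n) (x v : V n) (hx : ¬∃ k, Cy.z k = x) :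
    rC n Cy v x = 0 :=
  if_neg fun ⟨k, _, hk⟩ => hx ⟨k + 1, hk.symm⟩

lemma cycle_div (n : ℕ) (Cy : TCycle n) (x : V n) :
    phiC n Cy x (x + e1 n) + phiC n Cy x (x - e1 n)
      + phiC n Cy x (x + e2 n) + phiC n Cy x (x - e2 n) = 0 := by
  unfold phiC
  by_cases hx : ∃ k, Cy.z k = x
  · obtain ⟨k0, hk0⟩ := hx
    have hj0 : Cy.z ((k0 - 1) + 1) = x := by rwa [sub_add_cancel]
    rw [rC_out n Cy x _ k0 hk0, rC_out n Cy x _ k0 hk0, rC_out n Cy x _ k0 hk0,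
      rC_out n Cy x _ k0 hk0, rC_in n Cy x _ (k0 - 1) hj0, rC_in n Cy x _ (k0 - 1) hj0,
      rC_in n Cy x _ (k0 - 1) hj0, rC_in n Cy x _ (k0 - 1) hj0]
    have hout := four_ind_sum n x (Cy.z (k0 + 1)) (by rw [← hk0]; exact Cy.steps k0)
    have hin := four_ind_sum n x (Cy.z (k0 - 1))
      (isEdge_symm n _ _ (by rw [← hj0]; exact Cy.steps (k0 - 1)))
    linarith [hout, hin]
  · rw [rC_out_zero n Cy x _ hx, rC_out_zero n Cy x _ hx, rC_out_zero n Cy x _ hx,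
      rC_out_zero n Cy x _ hx, rC_in_zero n Cy x _ hx, rC_in_zero n Cy x _ hx,
      rC_in_zero n Cy x _ hx, rC_in_zero n Cy x _ hx]
    norm_num


lemma cycle_H_step (n : ℕ) (Cy : TCycle n) (i : ZMod (n+3)) :
    ∑ j : ZMod (n+3), phiC n Cy (i + 1, j) (i + 1 + 1, j)
      = ∑ j : ZMod (n+3), phiC n Cy (i, j) (i + 1, j) := by
  have h0 : ∑ j : ZMod (n+3), (phiC n Cy (i+1, j) ((i+1, j) + e1 n)
      + phiC n Cy (i+1, j) ((i+1, j) - e1 n) + phiC n Cy (i+1, j) ((i+1, j) + e2 n)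
      + phiC n Cy (i+1, j) ((i+1, j) - e2 n)) = 0 :=
    Finset.sum_eq_zero fun j _ => cycle_div n Cy (i+1, j)
  simp only [e1, e2, Prod.mk_add_mk, Prod.mk_sub_mk, add_zero, zero_add, sub_zero,
    add_sub_cancel_right] at h0
  rw [Finset.sum_add_distrib, Finset.sum_add_distrib, Finset.sum_add_distrib] at h0
  have h2 : ∑ j : ZMod (n+3), phiC n Cy (i+1, j) (i, j)
      = -∑ j : ZMod (n+3), phiC n Cy (i, j) (i+1, j) := by
    rw [← Finset.sum_neg_distrib]
    exact Finset.sum_congr rfl fun j _ => phiC_skew n Cy _ _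
  have h34 : ∑ j : ZMod (n+3), phiC n Cy (i+1, j) (i+1, j - 1)
      = -∑ j : ZMod (n+3), phiC n Cy (i+1, j) (i+1, j + 1) := by
    rw [← Finset.sum_neg_distrib]
    apply Fintype.sum_equiv (Equiv.subRight (1 : ZMod (n+3)))
    intro j
    simp only [Equiv.subRight_apply]
    rw [show (j - 1) + 1 = j from sub_add_cancel j 1]
    rw [phiC_skew n Cy (i+1, j) (i+1, j-1)]
  linarith [h0, h2, h34]

lemma cycle_V_step (n : ℕ) (Cy : TCycle n) (j : ZMod (n+3)) :
    ∑ i : ZMod (n+3), phiC n Cy (i, j + 1) (i, j + 1 + 1)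
      = ∑ i : ZMod (n+3), phiC n Cy (i, j) (i, j + 1) := by
  have h0 : ∑ i : ZMod (n+3), (phiC n Cy (i, j+1) ((i, j+1) + e1 n)
      + phiC n Cy (i, j+1) ((i, j+1) - e1 n) + phiC n Cy (i, j+1) ((i, j+1) + e2 n)
      + phiC n Cy (i, j+1) ((i, j+1) - e2 n)) = 0 :=
    Finset.sum_eq_zero fun i _ => cycle_div n Cy (i, j+1)
  simp only [e1, e2, Prod.mk_add_mk, Prod.mk_sub_mk, add_zero, zero_add, sub_zero,
    add_sub_cancel_right] at h0
  rw [Finset.sum_add_distrib, Finset.sum_add_distrib, Finset.sum_add_distrib] at h0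
  have h4 : ∑ i : ZMod (n+3), phiC n Cy (i, j+1) (i, j)
      = -∑ i : ZMod (n+3), phiC n Cy (i, j) (i, j+1) := by
    rw [← Finset.sum_neg_distrib]
    exact Finset.sum_congr rfl fun i _ => phiC_skew n Cy _ _
  have h12 : ∑ i : ZMod (n+3), phiC n Cy (i, j+1) (i - 1, j+1)
      = -∑ i : ZMod (n+3), phiC n Cy (i, j+1) (i + 1, j+1) := by
    rw [← Finset.sum_neg_distrib]
    apply Fintype.sum_equiv (Equiv.subRight (1 : ZMod (n+3)))
    intro i
    simp only [Equiv.subRight_apply]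
    rw [show (i - 1) + 1 = i from sub_add_cancel i 1]
    rw [phiC_skew n Cy (i, j+1) (i-1, j+1)]
  linarith [h0, h4, h12]

lemma count_plus (n : ℕ) (Cy : TCycle n) (d : V n) :
    ∑ x : V n, rC n Cy x (x + d)
      = ∑ k : Fin (Cy.len + 2), (if Cy.z (k+1) = Cy.z k + d then (1:ℝ) else 0) := by
  have hx : ∀ x : V n, rC n Cy x (x + d)
      = ∑ k : Fin (Cy.len + 2), (if Cy.z k = x ∧ Cy.z (k+1) = x + d then (1:ℝ) else 0) := by
    intro x
    rw [sum_ite_exists _ (fun k l hk hl => Cy.inj (hk.1.trans hl.1.symm))]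
    unfold rC
    congr 1; apply propext
    exact ⟨fun ⟨k, h1, h2⟩ => ⟨k, h1.symm, h2.symm⟩, fun ⟨k, h1, h2⟩ => ⟨k, h1.symm, h2.symm⟩⟩
  rw [Finset.sum_congr rfl fun x _ => hx x, Finset.sum_comm]
  apply Finset.sum_congr rfl
  intro k _
  rw [Finset.sum_eq_single (Cy.z k)]
  · simp
  · intro b _ hb; rw [if_neg fun hc => hb hc.1.symm]
  · intro hmem; exact absurd (Finset.mem_univ _) hmem

lemma count_rev (n : ℕ) (Cy : TCycle n) (d : V n) :
    ∑ x : V n, rC n Cy (x + d) x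
      = ∑ k : Fin (Cy.len + 2), (if Cy.z (k+1) = Cy.z k - d then (1:ℝ) else 0) := by
  have hx : ∀ x : V n, rC n Cy (x + d) x
      = ∑ k : Fin (Cy.len + 2), (if Cy.z (k+1) = x ∧ Cy.z k = x + d then (1:ℝ) else 0) := by
    intro x
    rw [sum_ite_exists _ (fun k l hk hl => add_right_cancel (Cy.inj (hk.1.trans hl.1.symm)))]
    unfold rC
    congr 1; apply propext
    constructor
    · rintro ⟨k, h1, h2⟩; exact ⟨k, h2.symm, h1.symm⟩
    · rintro ⟨k, h1, h2⟩; exact ⟨k, h2.symm, h1.symm⟩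
  rw [Finset.sum_congr rfl fun x _ => hx x, Finset.sum_comm]
  apply Finset.sum_congr rfl
  intro k _
  rw [Finset.sum_eq_single (Cy.z (k+1))]
  · rw [if_congr (show (Cy.z (k+1) = Cy.z (k+1) ∧ Cy.z k = Cy.z (k+1) + d)
        ↔ (Cy.z (k+1) = Cy.z k - d) from
        ⟨fun h => by rw [h.2]; abel, fun h => ⟨rfl, by rw [h]; abel⟩⟩) rfl rfl]
  · intro b _ hb; rw [if_neg fun hc => hb hc.1.symm]
  · intro hmem; exact absurd (Finset.mem_univ _) hmem


lemma disp_fst (n : ℕ) (a b : V n) (he : isEdge n a b) :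
    (((disp n a b).1 : ℤ) : ℝ)
      = (if b = a + e1 n then (1:ℝ) else 0) - (if b = a - e1 n then 1 else 0) := by
  rcases he with rfl|rfl|rfl|rfl
  · simp [disp, nbr_ne_1 n a, (nbr_ne_1 n a).symm]
  · simp [disp, nbr_ne_1 n a, (nbr_ne_1 n a).symm]
  · simp [disp, (nbr_ne_2 n a).symm, (nbr_ne_4 n a).symm, nbr_ne_2 n a, nbr_ne_4 n a]
  · simp [disp, (nbr_ne_3 n a).symm, (nbr_ne_5 n a).symm, (nbr_ne_6 n a).symm]

lemma disp_snd (n : ℕ) (a b : V n) (he : isEdge n a b) :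
    (((disp n a b).2 : ℤ) : ℝ)
      = (if b = a + e2 n then (1:ℝ) else 0) - (if b = a - e2 n then 1 else 0) := by
  rcases he with rfl|rfl|rfl|rfl
  · simp [disp, nbr_ne_2 n a, nbr_ne_3 n a]
  · simp [disp, (nbr_ne_1 n a).symm, nbr_ne_4 n a, nbr_ne_5 n a]
  · simp [disp, (nbr_ne_2 n a).symm, (nbr_ne_4 n a).symm, nbr_ne_6 n a]
  · simp [disp, (nbr_ne_3 n a).symm, (nbr_ne_5 n a).symm, (nbr_ne_6 n a).symm]

lemma cycle_H_total (n : ℕ) (Cy : TCycle n) (ht : HomTrivial n Cy) :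
    ∑ i : ZMod (n+3), ∑ j : ZMod (n+3), phiC n Cy (i, j) (i + 1, j) = 0 := by
  have hxy : ∑ i : ZMod (n+3), ∑ j : ZMod (n+3), phiC n Cy (i, j) (i + 1, j)
      = ∑ x : V n, phiC n Cy x (x + e1 n) := by
    rw [Fintype.sum_prod_type]
    refine Finset.sum_congr rfl fun i _ => Finset.sum_congr rfl fun j _ => ?_
    congr 1
    simp [e1, Prod.ext_iff]
  rw [hxy]
  unfold phiC
  rw [Finset.sum_sub_distrib, count_plus, count_rev, ← Finset.sum_sub_distrib]
  have hfin : ∀ k : Fin (Cy.len + 2),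
      ((if Cy.z (k+1) = Cy.z k + e1 n then (1:ℝ) else 0)
        - (if Cy.z (k+1) = Cy.z k - e1 n then 1 else 0))
      = (((disp n (Cy.z k) (Cy.z (k+1))).1 : ℤ) : ℝ) :=
    fun k => (disp_fst n _ _ (Cy.steps k)).symm
  rw [Finset.sum_congr rfl fun k _ => hfin k]
  have h := map_sum (AddMonoidHom.fst ℤ ℤ)
    (fun k : Fin (Cy.len + 2) => disp n (Cy.z k) (Cy.z (k+1))) Finset.univ
  rw [ht] at h
  have h0 : ∑ k : Fin (Cy.len + 2), (disp n (Cy.z k) (Cy.z (k+1))).1 = 0 := by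
    simpa using h.symm
  exact_mod_cast h0

lemma cycle_V_total (n : ℕ) (Cy : TCycle n) (ht : HomTrivial n Cy) :
    ∑ j : ZMod (n+3), ∑ i : ZMod (n+3), phiC n Cy (i, j) (i, j + 1) = 0 := by
  have hxy : ∑ j : ZMod (n+3), ∑ i : ZMod (n+3), phiC n Cy (i, j) (i, j + 1)
      = ∑ x : V n, phiC n Cy x (x + e2 n) := by
    rw [Finset.sum_comm, Fintype.sum_prod_type]
    refine Finset.sum_congr rfl fun i _ => Finset.sum_congr rfl fun j _ => ?_
    congr 1
    simp [e2, Prod.ext_iff]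
  rw [hxy]
  unfold phiC
  rw [Finset.sum_sub_distrib, count_plus, count_rev, ← Finset.sum_sub_distrib]
  have hfin : ∀ k : Fin (Cy.len + 2),
      ((if Cy.z (k+1) = Cy.z k + e2 n then (1:ℝ) else 0)
        - (if Cy.z (k+1) = Cy.z k - e2 n then 1 else 0))
      = (((disp n (Cy.z k) (Cy.z (k+1))).2 : ℤ) : ℝ) :=
    fun k => (disp_snd n _ _ (Cy.steps k)).symm
  rw [Finset.sum_congr rfl fun k _ => hfin k]
  have h := map_sum (AddMonoidHom.snd ℤ ℤ)
    (fun k : Fin (Cy.len + 2) => disp n (Cy.z k) (Cy.z (k+1))) Finset.univ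
  rw [ht] at h
  have h0 : ∑ k : Fin (Cy.len + 2), (disp n (Cy.z k) (Cy.z (k+1))).2 = 0 := by
    simpa using h.symm
  exact_mod_cast h0

lemma cycle_H (n : ℕ) (Cy : TCycle n) (ht : HomTrivial n Cy) (i : ZMod (n+3)) :
    ∑ j : ZMod (n+3), phiC n Cy (i, j) (i + 1, j) = 0 := by
  have hconst := const_of_step n (fun i0 => ∑ j : ZMod (n+3), phiC n Cy (i0, j) (i0 + 1, j))
    (fun i0 => cycle_H_step n Cy i0)
  have htot := cycle_H_total n Cy ht
  rw [Finset.sum_congr rfl fun i' _ => hconst i'] at htot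
  rw [Finset.sum_const, Finset.card_univ, ZMod.card, nsmul_eq_mul] at htot
  have hne : ((n+3 : ℕ) : ℝ) ≠ 0 := by positivity
  have h0 := (mul_eq_zero.1 htot).resolve_left hne
  exact (hconst i).trans h0

lemma cycle_V (n : ℕ) (Cy : TCycle n) (ht : HomTrivial n Cy) (j : ZMod (n+3)) :
    ∑ i : ZMod (n+3), phiC n Cy (i, j) (i, j + 1) = 0 := by
  have hconst := const_of_step n (fun j0 => ∑ i : ZMod (n+3), phiC n Cy (i, j0) (i, j0 + 1))
    (fun j0 => cycle_V_step n Cy j0)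
  have htot := cycle_V_total n Cy ht
  rw [Finset.sum_congr rfl fun j' _ => hconst j'] at htot
  rw [Finset.sum_const, Finset.card_univ, ZMod.card, nsmul_eq_mul] at htot
  have hne : ((n+3 : ℕ) : ℝ) ≠ 0 := by positivity
  have h0 := (mul_eq_zero.1 htot).resolve_left hne
  exact (hconst j).trans h0

lemma faceEdges_true (n : ℕ) (x : V n) : faceEdges n x true = aEdges n x := by
  simp [faceEdges]

lemma faceEdges_false (n : ℕ) (x : V n) :
    faceEdges n x false = (aEdges n x).map (fun p => (p.2, p.1)) := by
  simp [faceEdges]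

/-- If a weight `r` belongs to `R*` then `φ^r` is the boundary of a 2-chain; the same holds
if `r` belongs to `R^e`. -/
theorem phi_mem_dLambda2_of_mem (n : ℕ) (r : V n → V n → ℝ) (hr : IsWeight n r) :
    (MemRstar n r → ∃ ψ : V n → Bool → ℝ, IsChain n ψ ∧ ∀ a b, dChain n ψ a b = phiOf n r a b)
    ∧ (MemRe n r → ∃ ψ : V n → Bool → ℝ, IsChain n ψ ∧ ∀ a b, dChain n ψ a b = phiOf n r a b) := by
  constructor
  · rintro ⟨l, C, ρ, hρ, htriv, hdec⟩
    have hlin : ∀ u v, phiOf n r u v = ∑ k, ρ k * phiC n (C k) u v := by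
      intro u v
      unfold phiOf
      rw [hdec u v, hdec v u, ← Finset.sum_sub_distrib]
      exact Finset.sum_congr rfl fun k _ => by unfold phiC; ring
    apply exact_of_flux
    · intro a b; unfold phiOf; ring
    · intro a b h
      unfold phiOf
      rw [hr.2 a b h, hr.2 b a fun he => h (isEdge_symm n b a he)]
      ring
    · intro x
      rw [hlin, hlin, hlin, hlin, ← Finset.sum_add_distrib, ← Finset.sum_add_distrib,
        ← Finset.sum_add_distrib]
      apply Finset.sum_eq_zero
      intro k _
      have hc := cycle_div n (C k) x
      linear_combination (ρ k) * hc
    · intro i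
      rw [Finset.sum_congr rfl fun j _ => hlin (i, j) (i + 1, j), Finset.sum_comm]
      apply Finset.sum_eq_zero
      intro k _
      rw [← Finset.mul_sum, cycle_H n (C k) (htriv k) i, mul_zero]
    · rw [Finset.sum_congr rfl fun i _ => hlin (i, 0) (i, 1), Finset.sum_comm]
      apply Finset.sum_eq_zero
      intro k _
      rw [← Finset.mul_sum]
      have hV := cycle_V n (C k) (htriv k) 0
      rw [zero_add] at hV
      rw [hV, mul_zero]
  · rintro ⟨ρ₂, ρ₄, h2pos, h4pos, h2supp, hdec⟩
    refine ⟨fun x o => if o then (ρ₄ x true - ρ₄ x false) else -(ρ₄ x true - ρ₄ x false),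
      fun x => by simp, ?_⟩
    intro a b
    rw [dChain_eq]
    unfold phiOf
    rw [hdec a b, hdec b a]
    have hr2 : ∀ x y : V n, r2 n x y a b = r2 n x y b a := by
      intro x y; unfold r2; apply if_congr _ rfl rfl; tauto
    rw [Finset.sum_congr rfl fun x _ => Finset.sum_congr rfl fun y _ => by rw [hr2 x y]]
    have hr4t : ∀ x, r4 n x true a b = (if (a, b) ∈ aEdges n x then (1:ℝ) else 0) := by
      intro x; unfold r4; rw [faceEdges_true]
    have hr4f : ∀ x, r4 n x false a b = (if (b, a) ∈ aEdges n x then (1:ℝ) else 0) := by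
      intro x; unfold r4; rw [faceEdges_false]
      exact if_congr (mem_map_swap n _ a b) rfl rfl
    have hr4t' : ∀ x, r4 n x true b a = (if (b, a) ∈ aEdges n x then (1:ℝ) else 0) := by
      intro x; unfold r4; rw [faceEdges_true]
    have hr4f' : ∀ x, r4 n x false b a = (if (a, b) ∈ aEdges n x then (1:ℝ) else 0) := by
      intro x; unfold r4; rw [faceEdges_false]
      exact if_congr (mem_map_swap n _ b a) rfl rfl
    have key : (∑ x : V n, ∑ o : Bool, ρ₄ x o * r4 n x o a b)
        - (∑ x : V n, ∑ o : Bool, ρ₄ x o * r4 n x o b a)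
        = ∑ x : V n, ((if (a, b) ∈ aEdges n x then (ρ₄ x true - ρ₄ x false) else 0)
            - (if (b, a) ∈ aEdges n x then (ρ₄ x true - ρ₄ x false) else 0)) := by
      rw [← Finset.sum_sub_distrib]
      apply Finset.sum_congr rfl
      intro x _
      rw [Fintype.sum_bool, Fintype.sum_bool, hr4t x, hr4f x, hr4t' x, hr4f' x]
      split_ifs <;> ring
    rw [← Finset.sum_sub_distrib, ← key]
    ring

end Torus
end

section
/- For every N ≥ 3 there exists a weight r on the two-dimensional discrete torus of side N such that r(x,y) > 0 for every (x,y) ∈ E_N, φ^r ∈ dΛ², and yet r ∉ R*. -/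
namespace Torus

/-! ### Auxiliary material for the proof -/

section Aux

lemma neg_one_ne_one (n : ℕ) : -(1 : ZMod (n+3)) ≠ 1 := by
  intro h
  apply two_ne n
  have h1 : (1 : ZMod (n+3)) + 1 = 0 := by linear_combination -h
  calc (2 : ZMod (n+3)) = 1 + 1 := by norm_num
    _ = 0 := h1

lemma zero_ne_one' (n : ℕ) : (0 : ZMod (n+3)) ≠ 1 := fun h => one_ne n h.symm

lemma ne_a1 (n : ℕ) (a : V n) : a + e1 n ≠ a - e1 n := by
  intro h
  rw [sub_eq_add_neg, add_right_inj] at h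
  have := congrArg Prod.fst h
  simp [e1] at this
  exact neg_one_ne_one n this.symm
lemma ne_a2 (n : ℕ) (a : V n) : a + e1 n ≠ a + e2 n := by
  intro h; rw [add_right_inj] at h
  have := congrArg Prod.fst h; simp [e1, e2] at this; exact one_ne n this
lemma ne_a3 (n : ℕ) (a : V n) : a + e1 n ≠ a - e2 n := by
  intro h; rw [sub_eq_add_neg, add_right_inj] at h
  have := congrArg Prod.fst h; simp [e1, e2] at this; exact one_ne n this
lemma ne_a4 (n : ℕ) (a : V n) : a - e1 n ≠ a + e2 n := by
  intro h; rw [sub_eq_add_neg, add_right_inj] at h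
  have := congrArg Prod.snd h; simp [e1, e2] at this; exact one_ne n this.symm
lemma ne_a5 (n : ℕ) (a : V n) : a - e1 n ≠ a - e2 n := by
  intro h; rw [sub_eq_add_neg, sub_eq_add_neg, add_right_inj] at h
  have := congrArg Prod.fst h; simp [e1, e2] at this
  exact one_ne n this
lemma ne_a6 (n : ℕ) (a : V n) : a + e2 n ≠ a - e2 n := by
  intro h
  rw [sub_eq_add_neg, add_right_inj] at h
  have := congrArg Prod.snd h
  simp [e2] at this
  exact neg_one_ne_one n this.symm

lemma ne_c1 (n : ℕ) (a : V n) : a ≠ a + e1 n + e1 n := by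
  intro h
  have h' := congrArg Prod.fst h
  simp only [Prod.fst_add, e1] at h'
  exact two_ne n (by linear_combination -h')
lemma ne_c2 (n : ℕ) (a : V n) : a ≠ a - e1 n - e1 n := by
  intro h
  have h' := congrArg Prod.fst h
  simp only [Prod.fst_sub, e1] at h'
  exact two_ne n (by linear_combination h')
lemma ne_c5 (n : ℕ) (a : V n) : a ≠ a + e2 n + e1 n := by
  intro h
  have h' := congrArg Prod.fst h
  simp only [Prod.fst_add, e1, e2] at h'
  exact one_ne n (by linear_combination -h')
lemma ne_c6 (n : ℕ) (a : V n) : a ≠ a + e2 n - e1 n := by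
  intro h
  have h' := congrArg Prod.fst h
  simp only [Prod.fst_add, Prod.fst_sub, e1, e2] at h'
  exact one_ne n (by linear_combination h')
lemma ne_c7 (n : ℕ) (a : V n) : a ≠ a - e2 n + e1 n := by
  intro h
  have h' := congrArg Prod.fst h
  simp only [Prod.fst_add, Prod.fst_sub, e1, e2] at h'
  exact one_ne n (by linear_combination -h')
lemma ne_c8 (n : ℕ) (a : V n) : a ≠ a - e2 n - e1 n := by
  intro h
  have h' := congrArg Prod.fst h
  simp only [Prod.fst_sub, e1, e2] at h'
  exact one_ne n (by linear_combination h')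

lemma mem_aEdges (n : ℕ) (x a b : V n) : (a,b) ∈ aEdges n x ↔
    (b = a + e1 n ∧ x = a) ∨ (b = a + e2 n ∧ x = a - e1 n) ∨
    (b = a - e1 n ∧ x = a - e1 n - e2 n) ∨ (b = a - e2 n ∧ x = a - e2 n) := by
  simp only [aEdges, List.mem_cons, List.not_mem_nil, or_false, Prod.mk.injEq,
    List.mem_singleton]
  constructor
  · rintro (⟨h1, h2⟩ | ⟨h1, h2⟩ | ⟨h1, h2⟩ | ⟨h1, h2⟩) <;> subst h1 <;> subst h2
    · exact Or.inl ⟨rfl, rfl⟩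
    · exact Or.inr (Or.inl ⟨by abel, by abel⟩)
    · exact Or.inr (Or.inr (Or.inl ⟨by abel, by abel⟩))
    · exact Or.inr (Or.inr (Or.inr ⟨by abel, by abel⟩))
  · rintro (⟨h1, h2⟩ | ⟨h1, h2⟩ | ⟨h1, h2⟩ | ⟨h1, h2⟩) <;> subst h1 <;> subst h2
    · exact Or.inl ⟨rfl, rfl⟩
    · exact Or.inr (Or.inl ⟨by abel, by abel⟩)
    · exact Or.inr (Or.inr (Or.inl ⟨by abel, by abel⟩))
    · exact Or.inr (Or.inr (Or.inr ⟨by abel, by abel⟩))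

lemma mem_fEdges (n : ℕ) (x a b : V n) : (a,b) ∈ faceEdges n x false ↔
    (b = a - e1 n ∧ x = a - e1 n) ∨ (b = a - e2 n ∧ x = a - e1 n - e2 n) ∨
    (b = a + e1 n ∧ x = a - e2 n) ∨ (b = a + e2 n ∧ x = a) := by
  have hswap : (a,b) ∈ faceEdges n x false ↔ (b,a) ∈ aEdges n x := by
    simp only [faceEdges, if_neg (by simp : ¬(false : Bool) = true), List.mem_map]
    constructor
    · rintro ⟨⟨p1, p2⟩, hp, he⟩
      simp only [Prod.mk.injEq] at he
      rwa [← he.1, ← he.2]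
    · intro h; exact ⟨(b, a), h, rfl⟩
  rw [hswap, mem_aEdges]
  constructor
  · rintro (⟨h1, h2⟩ | ⟨h1, h2⟩ | ⟨h1, h2⟩ | ⟨h1, h2⟩) <;> subst h1 <;> subst h2
    · exact Or.inl ⟨by abel, by abel⟩
    · exact Or.inr (Or.inl ⟨by abel, by abel⟩)
    · exact Or.inr (Or.inr (Or.inl ⟨by abel, by abel⟩))
    · exact Or.inr (Or.inr (Or.inr ⟨by abel, by abel⟩))
  · rintro (⟨h1, h2⟩ | ⟨h1, h2⟩ | ⟨h1, h2⟩ | ⟨h1, h2⟩) <;> subst h1 <;> subst h2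
    · exact Or.inl ⟨by abel, by abel⟩
    · exact Or.inr (Or.inl ⟨by abel, by abel⟩)
    · exact Or.inr (Or.inr (Or.inl ⟨by abel, by abel⟩))
    · exact Or.inr (Or.inr (Or.inr ⟨by abel, by abel⟩))

/-- the small parameter -/
noncomputable def eps (n : ℕ) : ℝ := 1 / (3 * ((n:ℝ)+3)^2)

lemma eps_pos (n : ℕ) : 0 < eps n := by
  unfold eps; positivity

/-- the counterexample weight -/
noncomputable def rr (n : ℕ) : V n → V n → ℝ := fun a b =>
  (if isEdge n a b then eps n else 0)
  + (if a.2 = 0 ∧ b = a + e1 n then 1 else 0)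
  + (if a.2 = 1 ∧ b = a - e1 n then 1 else 0)

/-- the 2-chain -/
noncomputable def psi (n : ℕ) : V n → Bool → ℝ := fun x o =>
  if x.2 = 0 then (if o then 1 else -1) else 0

end Aux
section Aux2

lemma snd_add_e1 (n : ℕ) (a : V n) : (a + e1 n).2 = a.2 := by simp [e1]
lemma snd_sub_e1 (n : ℕ) (a : V n) : (a - e1 n).2 = a.2 := by simp [e1]
lemma snd_sub_e2 (n : ℕ) (a : V n) : (a - e2 n).2 = a.2 - 1 := by simp [e2]
lemma snd_sub_e1e2 (n : ℕ) (a : V n) : (a - e1 n - e2 n).2 = a.2 - 1 := by simp [e1, e2]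
lemma snd_add_e2 (n : ℕ) (a : V n) : (a + e2 n).2 = a.2 + 1 := by simp [e2]

lemma dChain_psi (n : ℕ) (a b : V n) : dChain n (psi n) a b = phiOf n (rr n) a b := by
  have hsum : dChain n (psi n) a b =
      (∑ x : V n, if (a,b) ∈ faceEdges n x true then psi n x true else 0)
      + (∑ x : V n, if (a,b) ∈ faceEdges n x false then psi n x false else 0) := by
    unfold dChain
    rw [← Finset.sum_add_distrib]
    exact Finset.sum_congr rfl fun x _ => Fintype.sum_bool _
  rw [hsum]
  by_cases hb1 : b = a + e1 n
  · subst hb1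
    have h1 : ∀ x : V n, ((a, a + e1 n) ∈ faceEdges n x true) ↔ x = a := by
      intro x; rw [faceEdges_true, mem_aEdges]
      simp [ne_a1 n a, ne_a2 n a, ne_a3 n a]
    have h2 : ∀ x : V n, ((a, a + e1 n) ∈ faceEdges n x false) ↔ x = a - e2 n := by
      intro x; rw [mem_fEdges]
      simp [ne_a1 n a, ne_a2 n a, ne_a3 n a]
    simp only [h1, h2, Finset.sum_ite_eq', Finset.mem_univ, if_true]
    have he : isEdge n a (a + e1 n) := Or.inl rfl
    have he' : isEdge n (a + e1 n) a := Or.inr (Or.inl (by abel))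
    have ht : a + e1 n - e1 n = a := by abel
    simp only [psi, phiOf, rr, if_pos he, if_pos he', ht, snd_add_e1, snd_sub_e2,
      ne_a1 n a, ne_c1 n a, sub_eq_zero, and_true, and_false, if_false,
      eq_self_iff_true, if_true]
    by_cases h0 : a.2 = 0 <;> by_cases hone : a.2 = 1
    · exfalso; rw [h0] at hone; exact one_ne n hone.symm
    all_goals simp [h0, hone, one_ne n, zero_ne_one' n]; try ring1
  by_cases hb2 : b = a - e1 n
  · subst hb2
    have h1 : ∀ x : V n, ((a, a - e1 n) ∈ faceEdges n x true) ↔ x = a - e1 n - e2 n := by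
      intro x; rw [faceEdges_true, mem_aEdges]
      simp [(ne_a1 n a).symm, ne_a4 n a, ne_a5 n a]
    have h2 : ∀ x : V n, ((a, a - e1 n) ∈ faceEdges n x false) ↔ x = a - e1 n := by
      intro x; rw [mem_fEdges]
      simp [(ne_a1 n a).symm, ne_a4 n a, ne_a5 n a]
    simp only [h1, h2, Finset.sum_ite_eq', Finset.mem_univ, if_true]
    have he : isEdge n a (a - e1 n) := Or.inr (Or.inl rfl)
    have he' : isEdge n (a - e1 n) a := Or.inl (by abel)
    have ht : a - e1 n + e1 n = a := by abel
    simp only [psi, phiOf, rr, if_pos he, if_pos he', ht, snd_sub_e1, snd_sub_e1e2,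
      (ne_a1 n a).symm, ne_c2 n a, sub_eq_zero, and_true, and_false, if_false,
      eq_self_iff_true, if_true]
    by_cases h0 : a.2 = 0 <;> by_cases hone : a.2 = 1
    · exfalso; rw [h0] at hone; exact one_ne n hone.symm
    all_goals simp [h0, hone, one_ne n, zero_ne_one' n]; try ring1
  by_cases hb3 : b = a + e2 n
  · subst hb3
    have h1 : ∀ x : V n, ((a, a + e2 n) ∈ faceEdges n x true) ↔ x = a - e1 n := by
      intro x; rw [faceEdges_true, mem_aEdges]
      simp [(ne_a2 n a).symm, (ne_a4 n a).symm, ne_a6 n a]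
    have h2 : ∀ x : V n, ((a, a + e2 n) ∈ faceEdges n x false) ↔ x = a := by
      intro x; rw [mem_fEdges]
      simp [(ne_a2 n a).symm, (ne_a4 n a).symm, ne_a6 n a]
    simp only [h1, h2, Finset.sum_ite_eq', Finset.mem_univ, if_true]
    have he : isEdge n a (a + e2 n) := Or.inr (Or.inr (Or.inl rfl))
    have he' : isEdge n (a + e2 n) a := Or.inr (Or.inr (Or.inr (by abel)))
    simp only [psi, phiOf, rr, if_pos he, if_pos he', snd_sub_e1, snd_add_e2,
      (ne_a2 n a).symm, (ne_a4 n a).symm, ne_c5 n a, ne_c6 n a,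
      and_true, and_false, if_false, eq_self_iff_true, if_true]
    split_ifs <;> first | ring1 | exact (‹False›.elim)
  by_cases hb4 : b = a - e2 n
  · subst hb4
    have h1 : ∀ x : V n, ((a, a - e2 n) ∈ faceEdges n x true) ↔ x = a - e2 n := by
      intro x; rw [faceEdges_true, mem_aEdges]
      simp [(ne_a3 n a).symm, (ne_a6 n a).symm, (ne_a5 n a).symm]
    have h2 : ∀ x : V n, ((a, a - e2 n) ∈ faceEdges n x false) ↔ x = a - e1 n - e2 n := by
      intro x; rw [mem_fEdges]
      simp [(ne_a3 n a).symm, (ne_a6 n a).symm, (ne_a5 n a).symm]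
    simp only [h1, h2, Finset.sum_ite_eq', Finset.mem_univ, if_true]
    have he : isEdge n a (a - e2 n) := Or.inr (Or.inr (Or.inr rfl))
    have he' : isEdge n (a - e2 n) a := Or.inr (Or.inr (Or.inl (by abel)))
    simp only [psi, phiOf, rr, if_pos he, if_pos he', snd_sub_e2, snd_sub_e1e2,
      (ne_a3 n a).symm, (ne_a5 n a).symm, ne_c7 n a, ne_c8 n a, snd_sub_e1,
      and_true, and_false, if_false, eq_self_iff_true, if_true]
    split_ifs <;> first | ring1 | exact (‹False›.elim)
  · -- not an edge
    have k1 : ¬ a = b + e1 n := fun h => hb2 (by rw [h]; abel)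
    have k2 : ¬ a = b - e1 n := fun h => hb1 (by rw [h]; abel)
    have k3 : ¬ a = b + e2 n := fun h => hb4 (by rw [h]; abel)
    have k4 : ¬ a = b - e2 n := fun h => hb3 (by rw [h]; abel)
    have h1 : ∀ x : V n, ¬ ((a, b) ∈ faceEdges n x true) := by
      intro x; rw [faceEdges_true, mem_aEdges]; simp [hb1, hb2, hb3, hb4]
    have h2 : ∀ x : V n, ¬ ((a, b) ∈ faceEdges n x false) := by
      intro x; rw [mem_fEdges]; simp [hb1, hb2, hb3, hb4]
    simp [h1, h2, phiOf, rr, isEdge, hb1, hb2, hb3, hb4, k1, k2, k3, k4]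

end Aux2
section Aux3

/-- the row-0 horizontal part of the functional -/
noncomputable def theta (n : ℕ) : V n → V n → ℝ := fun a b =>
  if a.2 = 0 ∧ b = a + e1 n then 1 else if a.2 = 0 ∧ b = a - e1 n then -1 else 0

/-- indicator of vertical edges -/
noncomputable def vind (n : ℕ) : V n → V n → ℝ := fun a b =>
  if b = a + e2 n ∨ b = a - e2 n then 1 else 0

/-- the linear functional separating `rr` from `R*` -/
noncomputable def Ffun (n : ℕ) : V n → V n → ℝ := fun a b =>
  theta n a b - ((n:ℝ)+3) * vind n a b

lemma vind_nonneg (n : ℕ) (a b : V n) : 0 ≤ vind n a b := by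
  unfold vind; split_ifs <;> norm_num

lemma theta_le (n : ℕ) (a b : V n) : theta n a b ≤ (if a.2 = 0 then (1:ℝ) else 0) := by
  unfold theta
  by_cases h0 : a.2 = 0
  · simp only [h0, true_and, if_true]
    split_ifs <;> norm_num
  · simp [h0]

lemma rC_eq_sum (n : ℕ) (C : TCycle n) (a b : V n) :
    rC n C a b = ∑ i : Fin (C.len + 2), if a = C.z i ∧ b = C.z (i+1) then (1:ℝ) else 0 := by
  unfold rC
  by_cases h : ∃ i : Fin (C.len + 2), a = C.z i ∧ b = C.z (i + 1)
  · obtain ⟨i0, hi⟩ := h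
    rw [if_pos ⟨i0, hi⟩, Finset.sum_eq_single i0]
    · rw [if_pos hi]
    · intro j _ hj
      rw [if_neg]
      rintro ⟨h1, h2⟩
      have : C.z j = C.z i0 := h1.symm.trans hi.1
      exact hj (C.inj this)
    · intro hmem; exact absurd (Finset.mem_univ i0) hmem
  · rw [if_neg h]
    symm
    apply Finset.sum_eq_zero
    intro i _
    rw [if_neg]
    exact fun hc => h ⟨i, hc⟩

lemma sum_mul_rC (n : ℕ) (C : TCycle n) (f : V n → V n → ℝ) :
    (∑ a : V n, ∑ b : V n, f a b * rC n C a b)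
      = ∑ i : Fin (C.len + 2), f (C.z i) (C.z (i + 1)) := by
  calc (∑ a : V n, ∑ b : V n, f a b * rC n C a b)
      = ∑ a : V n, ∑ b : V n, ∑ i : Fin (C.len + 2),
          (if b = C.z (i+1) then (if a = C.z i then f a b else 0) else 0) := by
        refine Finset.sum_congr rfl fun a _ => Finset.sum_congr rfl fun b _ => ?_
        rw [rC_eq_sum, Finset.mul_sum]
        refine Finset.sum_congr rfl fun i _ => ?_
        by_cases h1 : a = C.z i <;> by_cases h2 : b = C.z (i+1) <;> simp [h1, h2]
    _ = ∑ a : V n, ∑ i : Fin (C.len + 2), ∑ b : V n,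
          (if b = C.z (i+1) then (if a = C.z i then f a b else 0) else 0) :=
        Finset.sum_congr rfl fun a _ => Finset.sum_comm
    _ = ∑ i : Fin (C.len + 2), ∑ a : V n, ∑ b : V n,
          (if b = C.z (i+1) then (if a = C.z i then f a b else 0) else 0) :=
        Finset.sum_comm
    _ = ∑ i : Fin (C.len + 2), ∑ a : V n, (if a = C.z i then f a (C.z (i+1)) else 0) := by
        refine Finset.sum_congr rfl fun i _ => Finset.sum_congr rfl fun a _ => ?_
        simp [Finset.sum_ite_eq']
    _ = ∑ i : Fin (C.len + 2), f (C.z i) (C.z (i+1)) := by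
        refine Finset.sum_congr rfl fun i _ => ?_
        simp [Finset.sum_ite_eq']

lemma sum_indicator_row_le (n : ℕ) (C : TCycle n) :
    (∑ i : Fin (C.len + 2), if (C.z i).2 = 0 then (1:ℝ) else 0) ≤ ((n:ℝ)+3) := by
  haveI : NeZero (n+3) := ⟨by omega⟩
  rw [Finset.sum_boole]
  have hcard : (Finset.univ.filter (fun i : Fin (C.len+2) => (C.z i).2 = 0)).card
      ≤ (Finset.univ : Finset (ZMod (n+3))).card := by
    apply Finset.card_le_card_of_injOn (fun i => (C.z i).1)
    · intro i _; exact Finset.mem_univ _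
    · intro i hi j hj hij
      simp only [Finset.coe_filter, Set.mem_setOf_eq, Finset.mem_univ, true_and] at hi hj
      apply C.inj
      exact Prod.ext hij (hi.trans hj.symm)
  have hc2 : ((Finset.univ : Finset (ZMod (n+3))).card) = n+3 := by
    rw [Finset.card_univ, ZMod.card]
  rw [hc2] at hcard
  calc ((Finset.univ.filter (fun i : Fin (C.len+2) => (C.z i).2 = 0)).card : ℝ)
      ≤ ((n+3 : ℕ) : ℝ) := by exact_mod_cast hcard
    _ = (n:ℝ)+3 := by push_cast; ring

lemma cycle_bound (n : ℕ) (C : TCycle n) (hC : HomTrivial n C) :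
    (∑ i : Fin (C.len + 2), Ffun n (C.z i) (C.z (i + 1))) ≤ 0 := by
  have hsplit : (∑ i : Fin (C.len + 2), Ffun n (C.z i) (C.z (i + 1)))
      = (∑ i : Fin (C.len + 2), theta n (C.z i) (C.z (i + 1)))
        - ((n:ℝ)+3) * ∑ i : Fin (C.len + 2), vind n (C.z i) (C.z (i + 1)) := by
    unfold Ffun
    rw [Finset.sum_sub_distrib, Finset.mul_sum]
  rw [hsplit]
  have hθ : (∑ i : Fin (C.len + 2), theta n (C.z i) (C.z (i + 1)))
      ≤ ∑ i : Fin (C.len + 2), (if (C.z i).2 = 0 then (1:ℝ) else 0) :=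
    Finset.sum_le_sum fun i _ => theta_le n _ _
  by_cases hv : ∃ i : Fin (C.len+2), C.z (i+1) = C.z i + e2 n ∨ C.z (i+1) = C.z i - e2 n
  · obtain ⟨i0, hi0⟩ := hv
    have h1 : (1:ℝ) ≤ ∑ i : Fin (C.len + 2), vind n (C.z i) (C.z (i + 1)) := by
      have hs := Finset.single_le_sum (f := fun i : Fin (C.len+2) => vind n (C.z i) (C.z (i+1)))
        (fun i _ => vind_nonneg n _ _) (Finset.mem_univ i0)
      have : vind n (C.z i0) (C.z (i0+1)) = 1 := if_pos hi0
      linarith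
    have h2 : (∑ i : Fin (C.len + 2), theta n (C.z i) (C.z (i + 1))) ≤ ((n:ℝ)+3) :=
      le_trans hθ (sum_indicator_row_le n C)
    have h3 : (0:ℝ) ≤ (n:ℝ)+3 := by positivity
    nlinarith
  · push_neg at hv
    have hstep : ∀ i : Fin (C.len+2), C.z (i+1) = C.z i + e1 n ∨ C.z (i+1) = C.z i - e1 n := by
      intro i
      rcases C.steps i with h|h|h|h
      · exact Or.inl h
      · exact Or.inr h
      · exact absurd h (hv i).1
      · exact absurd h (hv i).2
    have hvz : ∀ i : Fin (C.len+2), vind n (C.z i) (C.z (i+1)) = 0 := fun i =>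
      if_neg (by rw [not_or]; exact ⟨(hv i).1, (hv i).2⟩)
    have hsnd : ∀ i : Fin (C.len+2), (C.z (i+1)).2 = (C.z i).2 := by
      intro i
      rcases hstep i with h|h <;> rw [h]
      · exact snd_add_e1 n _
      · exact snd_sub_e1 n _
    have hkey : ∀ k : ℕ, ∀ hk : k < C.len + 2, (C.z ⟨k, hk⟩).2 = (C.z 0).2 := by
      intro k
      induction k with
      | zero =>
          intro hk
          have : (⟨0, hk⟩ : Fin (C.len+2)) = 0 := by ext; simp
          rw [this]
      | succ k ih =>
          intro hk
          have hk' : k < C.len + 2 := Nat.lt_of_succ_lt hk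
          have heq : (⟨k+1, hk⟩ : Fin (C.len+2)) = (⟨k, hk'⟩ : Fin (C.len+2)) + 1 := by
            ext
            simp [Fin.add_def, Fin.val_one, Nat.mod_eq_of_lt hk]
          rw [heq, hsnd ⟨k, hk'⟩, ih hk']
    have hconst : ∀ i : Fin (C.len+2), (C.z i).2 = (C.z 0).2 := fun i => by
      have := hkey i.1 i.2
      simpa using this
    have hθz : (∑ i : Fin (C.len + 2), theta n (C.z i) (C.z (i + 1))) ≤ 0 := by
      by_cases h0 : (C.z 0).2 = 0
      · have hdisp : ∀ i : Fin (C.len+2),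
            theta n (C.z i) (C.z (i+1)) = (((disp n (C.z i) (C.z (i+1))).1 : ℤ) : ℝ) := by
          intro i
          have hz : (C.z i).2 = 0 := (hconst i).trans h0
          rcases hstep i with h|h <;> rw [h]
          · simp [theta, disp, hz]
          · simp [theta, disp, hz, (ne_a1 n (C.z i)).symm]
        have hcast : (∑ i : Fin (C.len + 2), theta n (C.z i) (C.z (i + 1)))
            = (((∑ i : Fin (C.len + 2), disp n (C.z i) (C.z (i+1))).1 : ℤ) : ℝ) := by
          rw [Finset.sum_congr rfl fun i _ => hdisp i, Prod.fst_sum]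
          push_cast
          ring
        rw [hcast, hC]
        norm_num
      · have hz : ∀ i : Fin (C.len+2), theta n (C.z i) (C.z (i+1)) = 0 := by
          intro i
          unfold theta
          rw [if_neg, if_neg]
          · rintro ⟨hz2, -⟩; exact h0 ((hconst i).symm.trans hz2)
          · rintro ⟨hz2, -⟩; exact h0 ((hconst i).symm.trans hz2)
        exact le_of_eq (Finset.sum_eq_zero fun i _ => hz i)
    have hvsum : (∑ i : Fin (C.len + 2), vind n (C.z i) (C.z (i + 1))) = 0 :=
      Finset.sum_eq_zero fun i _ => hvz i
    rw [hvsum]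
    linarith

lemma sum_F_rr (n : ℕ) :
    (∑ a : V n, ∑ b : V n, Ffun n a b * rr n a b) = ((n:ℝ)+3)/3 := by
  haveI : NeZero (n+3) := ⟨by omega⟩
  have inner : ∀ a : V n, (∑ b : V n, Ffun n a b * rr n a b)
      = (if a.2 = 0 then (1:ℝ) else 0) - ((n:ℝ)+3) * (2 * eps n) := by
    intro a
    have hzero : ∀ b : V n,
        b ∉ ({a + e1 n, a - e1 n, a + e2 n, a - e2 n} : Finset (V n)) →
        Ffun n a b * rr n a b = 0 := by
      intro b hb
      simp only [Finset.mem_insert, Finset.mem_singleton] at hb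
      push_neg at hb
      obtain ⟨k1, k2, k3, k4⟩ := hb
      have hr : rr n a b = 0 := by
        simp [rr, isEdge, k1, k2, k3, k4]
      rw [hr, mul_zero]
    rw [← Finset.sum_subset (Finset.subset_univ _) (fun b _ hb => hzero b hb)]
    rw [Finset.sum_insert (by simp [ne_a1 n a, ne_a2 n a, ne_a3 n a]),
        Finset.sum_insert (by simp [ne_a4 n a, ne_a5 n a]),
        Finset.sum_insert (by simp [ne_a6 n a]),
        Finset.sum_singleton]
    simp only [Ffun, theta, vind, rr, isEdge,
      ne_a1 n a, (ne_a1 n a).symm, ne_a2 n a, (ne_a2 n a).symm,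
      ne_a3 n a, (ne_a3 n a).symm, ne_a4 n a, (ne_a4 n a).symm,
      ne_a5 n a, (ne_a5 n a).symm, ne_a6 n a, (ne_a6 n a).symm,
      eq_self_iff_true, true_or, or_true, false_or, or_false, if_true, if_false,
      and_true, and_false, true_and, false_and]
    by_cases h0 : a.2 = 0 <;> simp [h0, zero_ne_one' n, one_ne n] <;> ring1
  rw [Finset.sum_congr rfl fun a _ => inner a, Finset.sum_sub_distrib]
  have hrow : (∑ a : V n, if a.2 = 0 then (1:ℝ) else 0) = ((n:ℝ)+3) := by
    rw [Fintype.sum_prod_type]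
    have h1 : ∀ x : ZMod (n+3),
        (∑ y : ZMod (n+3), if (Prod.mk x y).2 = 0 then (1:ℝ) else 0) = 1 := by
      intro x
      simp [Finset.sum_ite_eq']
    rw [Finset.sum_congr rfl fun x _ => h1 x, Finset.sum_const, Finset.card_univ, ZMod.card,
      nsmul_eq_mul, mul_one]
    push_cast
    ring
  rw [hrow, Finset.sum_const, Finset.card_univ]
  have hcardV : (Fintype.card (V n)) = (n+3)^2 := by
    rw [Fintype.card_prod, ZMod.card]
    ring
  rw [hcardV]
  have h3 : ((n:ℝ)+3) ≠ 0 := by positivity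
  unfold eps
  push_cast
  field_simp
  ring_nf
  have h9 : (9 + (n:ℝ) * 3) ≠ 0 := by positivity
  field_simp
  ring

lemma swap3 (n : ℕ) (l : ℕ) (f : V n → V n → Fin l → ℝ) :
    (∑ a : V n, ∑ b : V n, ∑ i : Fin l, f a b i)
      = ∑ i : Fin l, ∑ a : V n, ∑ b : V n, f a b i :=
  calc (∑ a : V n, ∑ b : V n, ∑ i : Fin l, f a b i)
      = ∑ a : V n, ∑ i : Fin l, ∑ b : V n, f a b i :=
        Finset.sum_congr rfl fun a _ => Finset.sum_comm
    _ = ∑ i : Fin l, ∑ a : V n, ∑ b : V n, f a b i := Finset.sum_comm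

end Aux3

/-- There is a strictly positive weight `r` with `φ^r ∈ dΛ²` which nevertheless does not
belong to `R*`. -/
theorem exists_not_mem_Rstar (n : ℕ) :
    ∃ r : V n → V n → ℝ, IsWeight n r ∧ (∀ a b, isEdge n a b → 0 < r a b) ∧
      (∃ ψ : V n → Bool → ℝ, IsChain n ψ ∧ ∀ a b, dChain n ψ a b = phiOf n r a b) ∧
      ¬MemRstar n r := by
  refine ⟨rr n, ⟨?_, ?_⟩, ?_, ⟨psi n, ?_, fun a b => dChain_psi n a b⟩, ?_⟩
  · -- nonnegativity
    intro a b
    unfold rr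
    have h := (eps_pos n).le
    split_ifs <;> norm_num <;> linarith
  · -- support on edges
    intro a b h
    unfold rr
    rw [if_neg h, if_neg (fun hc => h (Or.inl hc.2)),
      if_neg (fun hc => h (Or.inr (Or.inl hc.2)))]
    norm_num
  · -- positivity on edges
    intro a b hab
    unfold rr
    rw [if_pos hab]
    have h1 : (0:ℝ) ≤ if a.2 = 0 ∧ b = a + e1 n then 1 else 0 := by split_ifs <;> norm_num
    have h2 : (0:ℝ) ≤ if a.2 = 1 ∧ b = a - e1 n then 1 else 0 := by split_ifs <;> norm_num
    have := eps_pos n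
    linarith
  · -- IsChain
    intro x
    unfold psi
    by_cases h : x.2 = 0 <;> simp [h]
  · -- not in R*
    rintro ⟨l, C, ρ, hρ, htriv, hsum⟩
    have hle : (∑ a : V n, ∑ b : V n, Ffun n a b * rr n a b) ≤ 0 := by
      have hexp : ∀ a b : V n, Ffun n a b * rr n a b
          = ∑ i : Fin l, ρ i * (Ffun n a b * rC n (C i) a b) := by
        intro a b
        rw [hsum a b, Finset.mul_sum]
        exact Finset.sum_congr rfl fun i _ => by ring
      calc (∑ a : V n, ∑ b : V n, Ffun n a b * rr n a b)
          = ∑ a : V n, ∑ b : V n, ∑ i : Fin l, ρ i * (Ffun n a b * rC n (C i) a b) := by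
            exact Finset.sum_congr rfl fun a _ => Finset.sum_congr rfl fun b _ => hexp a b
        _ = ∑ i : Fin l, ∑ a : V n, ∑ b : V n, ρ i * (Ffun n a b * rC n (C i) a b) :=
            swap3 n l _
        _ = ∑ i : Fin l, ρ i * (∑ a : V n, ∑ b : V n, Ffun n a b * rC n (C i) a b) := by
            refine Finset.sum_congr rfl fun i _ => ?_
            rw [Finset.mul_sum]
            exact Finset.sum_congr rfl fun a _ => (Finset.mul_sum _ _ _).symm
        _ ≤ 0 := by
            apply Finset.sum_nonpos
            intro i _
            rw [sum_mul_rC n (C i) (Ffun n)]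
            exact mul_nonpos_of_nonneg_of_nonpos (hρ i) (cycle_bound n (C i) (htriv i))
    rw [sum_F_rr n] at hle
    have hpos : (0:ℝ) < ((n:ℝ)+3)/3 := by positivity
    linarith

end Torus
end

section
/- On the two-dimensional discrete torus of side N, let r and r' be weights with r(x,y) ≤ r'(x,y) for every (x,y) ∈ E_N and φ^r = φ^{r'}. If r ∈ R* then r' ∈ R*; likewise if r ∈ R^e then r' ∈ R^e. -/
namespace Torus

section Aux

lemma edge_ne {n : ℕ} {a b : V n} (h : isEdge n a b) : a ≠ b := by
  have h1 := one_ne n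
  rcases h with h|h|h|h <;> subst h <;>
    simp [e1, e2, Prod.ext_iff, eq_sub_iff_add_eq, left_eq_add, add_eq_left, h1]

lemma edge_symm {n : ℕ} {a b : V n} (h : isEdge n a b) : isEdge n b a := by
  rcases h with h|h|h|h <;> subst h <;> unfold isEdge <;>
    [right;left;skip;right] <;> [left;skip;(right;right;right);(right;left)] <;> abel

lemma disp_rev {n : ℕ} {a b : V n} (h : isEdge n a b) : disp n b a = - disp n a b := by
  have h1 := one_ne n
  have h2 := two_ne n
  rcases h with h|h|h|h <;> subst h <;>
    simp [disp, e1, e2, Prod.ext_iff, sub_eq_iff_eq_add, left_eq_add, add_assoc,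
      eq_sub_iff_add_eq, h1, h2, one_add_one_eq_two]

def twoCycle (n : ℕ) (x y : V n) (h : isEdge n x y) : TCycle n where
  len := 0
  z := ![x, y]
  inj := by
    have := edge_ne h
    intro i j hij
    fin_cases i <;> fin_cases j <;> simp_all
  steps := by
    intro i
    fin_cases i
    · simpa using h
    · simpa using edge_symm h

lemma twoCycle_trivial (n : ℕ) (x y : V n) (h : isEdge n x y) :
    HomTrivial n (twoCycle n x y h) := by
  have h1 : ((1 : Fin 2) + 1) = 0 := by decide
  have h0 : ((0 : Fin 2) + 1) = 1 := by decide
  unfold HomTrivial twoCycle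
  rw [Fin.sum_univ_two]
  simp only [h0, h1, Matrix.cons_val_zero, Matrix.cons_val_one, Matrix.head_cons]
  rw [disp_rev h]; ring

lemma rC_twoCycle (n : ℕ) (x y : V n) (h : isEdge n x y) (a b : V n) :
    rC n (twoCycle n x y h) a b = r2 n x y a b := by
  have h1 : ((1 : Fin 2) + 1) = 0 := by decide
  have h0 : ((0 : Fin 2) + 1) = 1 := by decide
  unfold rC r2 twoCycle
  congr 1
  simp only [eq_iff_iff]
  constructor
  · rintro ⟨i, hi⟩
    fin_cases i
    · simp_all
    · obtain ⟨ha, hb⟩ := hi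
      exact Or.inr ⟨ha, hb.trans (by show ![x, y] ((1 : Fin 2) + 1) = x; rw [h1]; rfl)⟩
  · rintro (⟨ha, hb⟩ | ⟨ha, hb⟩)
    · exact ⟨0, by simp [h0, ha, hb]⟩
    · exact ⟨1, by simp [h1, ha, hb]⟩

lemma sum_half_r2 (n : ℕ) (s : V n → V n → ℝ) (hsym : ∀ a b, s a b = s b a)
    (hdiag : ∀ a, s a a = 0) (a b : V n) :
    ∑ x : V n, ∑ y : V n, s x y / 2 * r2 n x y a b = s a b := by
  by_cases hab : a = b
  · subst hab
    have : ∀ x y : V n, s x y / 2 * r2 n x y a a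
        = if x = a then (if y = a then s x y / 2 else 0) else 0 := by
      intro x y
      unfold r2
      split_ifs with h h1 h2 <;> simp_all <;> tauto
    simp only [this]
    simp [hdiag]
  · have : ∀ x y : V n, s x y / 2 * r2 n x y a b =
        (if x = a then (if y = b then s x y / 2 else 0) else 0)
        + (if x = b then (if y = a then s x y / 2 else 0) else 0) := by
      intro x y
      unfold r2
      split_ifs <;> simp_all <;> tauto
    simp only [this, Finset.sum_add_distrib]
    simp [hsym a b]

end Aux

/-- Monotonicity of `R*` and `R^e` at fixed discrete vector field: if `r ≤ r'` on edges and
`φ^r = φ^{r'}`, then `r ∈ R*` implies `r' ∈ R*`, and likewise for `R^e`. -/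
theorem mono_Rstar_Re (n : ℕ) (r r' : V n → V n → ℝ)
    (hr : IsWeight n r) (hr' : IsWeight n r')
    (hle : ∀ a b, isEdge n a b → r a b ≤ r' a b)
    (hphi : ∀ a b, phiOf n r a b = phiOf n r' a b) :
    (MemRstar n r → MemRstar n r') ∧ (MemRe n r → MemRe n r') := by
  classical
  obtain ⟨s, hsdef⟩ : ∃ s : V n → V n → ℝ, s = fun a b => r' a b - r a b := ⟨_, rfl⟩
  have hrr' : ∀ a b, r' a b = r a b + s a b := by intro a b; rw [hsdef]; ring
  have hsym : ∀ a b, s a b = s b a := by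
    intro a b
    have := hphi a b
    simp only [phiOf] at this
    simp only [hsdef]
    linarith
  have hsupp : ∀ a b, ¬ isEdge n a b → s a b = 0 := by
    intro a b h
    simp [hsdef, hr.2 a b h, hr'.2 a b h]
  have hnn : ∀ a b, 0 ≤ s a b := by
    intro a b
    by_cases h : isEdge n a b
    · have := hle a b h; simp only [hsdef]; linarith
    · rw [hsupp a b h]
  have hdiag : ∀ a, s a a = 0 := fun a => hsupp a a (fun h => edge_ne h rfl)
  constructor
  · rintro ⟨l, C, ρ, hρ, htriv, hdec⟩
    set C0 : V n × V n → TCycle n := fun p =>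
      if h : isEdge n p.1 p.2 then twoCycle n p.1 p.2 h
      else twoCycle n 0 (e1 n) (Or.inl (zero_add _).symm) with hC0
    set ρ0 : V n × V n → ℝ := fun p => if isEdge n p.1 p.2 then s p.1 p.2 / 2 else 0 with hρ0
    have hsum0 : ∀ a b, ∑ p : V n × V n, ρ0 p * rC n (C0 p) a b = s a b := by
      intro a b
      have hterm : ∀ p : V n × V n,
          ρ0 p * rC n (C0 p) a b = s p.1 p.2 / 2 * r2 n p.1 p.2 a b := by
        intro p
        by_cases h : isEdge n p.1 p.2
        · simp only [hρ0, hC0, if_pos h, dif_pos h, rC_twoCycle]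
        · simp [hρ0, hC0, h, hsupp _ _ h]
      rw [Finset.sum_congr rfl fun p _ => hterm p, Fintype.sum_prod_type]
      exact sum_half_r2 n s hsym hdiag a b
    set m := Fintype.card (V n × V n) with hm
    set e : (Fin l ⊕ (V n × V n)) ≃ Fin (l + m) :=
      ((Equiv.refl (Fin l)).sumCongr (Fintype.equivFin (V n × V n))).trans finSumFinEquiv with he
    have hnn' : ∀ j : Fin l ⊕ (V n × V n), 0 ≤ Sum.elim ρ ρ0 j := by
      rintro (j | p)
      · exact hρ j
      · simp only [Sum.elim_inr, hρ0]
        split_ifs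
        · exact div_nonneg (hnn p.1 p.2) (by norm_num)
        · exact le_rfl
    have htriv' : ∀ j : Fin l ⊕ (V n × V n), HomTrivial n (Sum.elim C C0 j) := by
      rintro (j | p)
      · exact htriv j
      · simp only [Sum.elim_inr, hC0]
        split_ifs with h
        · exact twoCycle_trivial n p.1 p.2 h
        · exact twoCycle_trivial n _ _ _
    refine ⟨l + m, Sum.elim C C0 ∘ e.symm, Sum.elim ρ ρ0 ∘ e.symm,
      fun i => hnn' (e.symm i), fun i => htriv' (e.symm i), ?_⟩
    intro a b
    have hcomp := Equiv.sum_comp e.symm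
      (fun j => Sum.elim ρ ρ0 j * rC n (Sum.elim C C0 j) a b)
    calc r' a b = r a b + s a b := hrr' a b
      _ = (∑ i : Fin l, ρ i * rC n (C i) a b)
          + ∑ p : V n × V n, ρ0 p * rC n (C0 p) a b := by rw [hdec a b, hsum0 a b]
      _ = ∑ j : Fin l ⊕ (V n × V n), Sum.elim ρ ρ0 j * rC n (Sum.elim C C0 j) a b := by
          rw [Fintype.sum_sum_type]; simp
      _ = ∑ i : Fin (l + m), (Sum.elim ρ ρ0 ∘ e.symm) i
            * rC n ((Sum.elim C C0 ∘ e.symm) i) a b := hcomp.symm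
  · rintro ⟨ρ₂, ρ₄, h2nn, h4nn, h2supp, hdec⟩
    refine ⟨fun x y => ρ₂ x y + s x y / 2, ρ₄, ?_, h4nn, ?_, ?_⟩
    · intro x y
      have h1 := hnn x y
      have h2 := h2nn x y
      dsimp only
      linarith
    · intro x y h
      dsimp only
      rw [h2supp x y h, hsupp x y h]
      norm_num
    · intro a b
      rw [hrr' a b, hdec a b]
      have : ∑ x : V n, ∑ y : V n, (ρ₂ x y + s x y / 2) * r2 n x y a b
          = (∑ x : V n, ∑ y : V n, ρ₂ x y * r2 n x y a b)
            + ∑ x : V n, ∑ y : V n, s x y / 2 * r2 n x y a b := by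
        simp only [add_mul, Finset.sum_add_distrib]
      rw [this, sum_half_r2 n s hsym hdiag a b]
      ring


end Torus
end

section
/- On the two-dimensional discrete torus of side N, suppose a weight r has the form r = ∑_{(x,y)} ρ(C_{x,y}) r^{C_{x,y}} + ∑_{f ∈ F_N} ρ(C_f) r^{C_f}, where ρ assigns a nonnegative coefficient to each elementary 2-cycle C_{x,y} = (x,y,x) and to each elementary face 4-cycle C_f, f ∈ F_N. Define the 2-chain ψ^ρ by ψ^ρ(f) := ρ(C_f) − ρ(C_{f^c}) for f ∈ F_N. Then φ^r = dψ^ρ. -/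
namespace Torus

set_option maxHeartbeats 1000000 in
lemma mem_faceEdges_swap (n : ℕ) (x : V n) (o : Bool) (a b : V n) :
    (b, a) ∈ faceEdges n x o ↔ (a, b) ∈ faceEdges n x (!o) := by
  cases o <;> simp [faceEdges, aEdges, Prod.ext_iff] <;> tauto

/-- If `r` is a superposition of elementary cycles with coefficients `ρ₂` (on 2-cycles over
edges) and `ρ₄` (on face 4-cycles), then `φ^r = dψ^ρ`, where `ψ^ρ(f) = ρ(C_f) - ρ(C_{f^c})`. -/
theorem phi_eq_dChain_of_elementary_decomposition (n : ℕ) (r : V n → V n → ℝ)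
    (ρ₂ : V n → V n → ℝ) (ρ₄ : V n → Bool → ℝ)
    (h2 : ∀ x y, 0 ≤ ρ₂ x y) (h4 : ∀ x o, 0 ≤ ρ₄ x o)
    (h2e : ∀ x y, ¬isEdge n x y → ρ₂ x y = 0)
    (hdec : ∀ a b, r a b = (∑ x : V n, ∑ y : V n, ρ₂ x y * r2 n x y a b)
        + ∑ x : V n, ∑ o : Bool, ρ₄ x o * r4 n x o a b) :
    ∀ a b, phiOf n r a b = dChain n (fun x o => ρ₄ x o - ρ₄ x (!o)) a b := by
  intro a b
  have hr2 : ∀ x y : V n, r2 n x y a b = r2 n x y b a := by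
    intro x y
    unfold r2
    exact if_congr (by tauto) rfl rfl
  have key : ∀ x : V n,
      (∑ o : Bool, ρ₄ x o * r4 n x o a b) - (∑ o : Bool, ρ₄ x o * r4 n x o b a)
      = ∑ o : Bool, (if (a, b) ∈ faceEdges n x o then ρ₄ x o - ρ₄ x (!o) else 0) := by
    intro x
    simp only [Fintype.sum_bool, r4]
    simp only [show ((b, a) ∈ faceEdges n x true) ↔ ((a, b) ∈ faceEdges n x false) from
        by simpa using mem_faceEdges_swap n x true a b,
      show ((b, a) ∈ faceEdges n x false) ↔ ((a, b) ∈ faceEdges n x true) from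
        by simpa using mem_faceEdges_swap n x false a b, Bool.not_true, Bool.not_false]
    by_cases ht : (a, b) ∈ faceEdges n x true <;>
      by_cases hf : (a, b) ∈ faceEdges n x false <;>
      simp [ht, hf] <;> ring
  have h2eq : (∑ x : V n, ∑ y : V n, ρ₂ x y * r2 n x y a b)
      = ∑ x : V n, ∑ y : V n, ρ₂ x y * r2 n x y b a :=
    Finset.sum_congr rfl fun x _ => Finset.sum_congr rfl fun y _ => by rw [hr2]
  rw [phiOf, hdec a b, hdec b a, dChain, h2eq]
  rw [show ∀ A B B' : ℝ, (A + B) - (A + B') = B - B' from fun _ _ _ => by ring]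
  rw [← Finset.sum_sub_distrib]
  exact Finset.sum_congr rfl fun x _ => key x


end Torus
end
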